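/- arXiv:2202.04304 — 7 statements merged into one kernel-verified Lean document; each statement's English description precedes it below -/
import Mathlib

section
/- For every integer M ≥ 2 and residue r ∈ {0,1,...,M-1}, the ratio (Σ_{k ≡ r mod M, 0 ≤ k ≤ n} C(n,k)) / 2^n converges to 1/M as n → ∞. -/
open Finset Filter

/-! Roots-of-unity filter: for a primitive `M`-th root of unity `ζ`,
`M * ∑_{k ≡ r} C(n, k) = ∑_{j < M} ζ^(-j r) (1 + ζ^j)^n`,
where `ζ^(-j r)` is written `ζ^(j (M - r))`.
After dividing by `2^n` the term `j = 0` is `1`, and every other term decays geometrically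
because `‖1 + ζ^j‖ < 2` as soon as `ζ^j ≠ 1`. -/

theorem Nat.dvd_add_sub_iff_mod_eq {M r k : ℕ} (hr : r < M) : M ∣ k + (M - r) ↔ k % M = r :=
  calc M ∣ k + (M - r) ↔ k + (M - r) ≡ r + (M - r) [MOD M] := by
        rw [Nat.add_sub_cancel' hr.le, Nat.ModEq, Nat.mod_self, Nat.dvd_iff_mod_eq_zero]
    _ ↔ k ≡ r [MOD M] := Nat.ModEq.rfl.add_iff_right
    _ ↔ k % M = r := by rw [Nat.ModEq, Nat.mod_eq_of_lt hr]

theorem Complex.norm_one_add_lt_two {z : ℂ} (hz : ‖z‖ = 1) (hz1 : z ≠ 1) :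
    ‖1 + z‖ < 2 :=
  calc ‖1 + z‖ < ‖(1 : ℂ)‖ + ‖z‖ := (norm_add_le 1 z).lt_of_ne fun h =>
        hz1 (eq_of_norm_eq_of_norm_add_eq (by rw [norm_one, hz]) h).symm
    _ = 2 := by rw [norm_one, hz]; norm_num

namespace IsPrimitiveRoot

variable {R : Type*} [CommRing R] [IsDomain R] {ζ : R} {M : ℕ}

theorem sum_pow_pow_eq_ite (hζ : IsPrimitiveRoot ζ M) (m : ℕ) :
    ∑ j ∈ range M, (ζ ^ m) ^ j = if M ∣ m then (M : R) else 0 := by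
  split_ifs with hm
  · simp [(hζ.pow_eq_one_iff_dvd m).mpr hm]
  · have hne : ζ ^ m - 1 ≠ 0 := sub_ne_zero.mpr fun h => hm ((hζ.pow_eq_one_iff_dvd m).mp h)
    refine (mul_eq_zero.mp ?_).resolve_right hne
    rw [geom_sum_mul, ← pow_mul, mul_comm, pow_mul, hζ.pow_eq_one, one_pow, sub_self]

theorem natCast_mul_sum_ite_mod_eq (hζ : IsPrimitiveRoot ζ M) {r : ℕ} (hr : r < M)
    (s : Finset ℕ) (a : ℕ → R) :
    (M : R) * ∑ k ∈ s, (if k % M = r then a k else 0) =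
      ∑ j ∈ range M, ζ ^ (j * (M - r)) * ∑ k ∈ s, a k * (ζ ^ j) ^ k := by
  have hfilter (k : ℕ) : (M : R) * (if k % M = r then a k else 0) =
      a k * ∑ j ∈ range M, (ζ ^ (k + (M - r))) ^ j := by
    rw [hζ.sum_pow_pow_eq_ite]
    simp only [Nat.dvd_add_sub_iff_mod_eq hr]
    split_ifs <;> ring
  simp_rw [mul_sum, hfilter, mul_sum]
  rw [sum_comm]
  refine sum_congr rfl fun j _ => sum_congr rfl fun k _ => ?_
  ring

theorem natCast_mul_sum_choose_mod_eq (hζ : IsPrimitiveRoot ζ M) {r : ℕ} (hr : r < M)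
    (n : ℕ) :
    (M : R) * ∑ k ∈ range (n + 1), (if k % M = r then (n.choose k : R) else 0) =
      ∑ j ∈ range M, ζ ^ (j * (M - r)) * (1 + ζ ^ j) ^ n := by
  simp_rw [hζ.natCast_mul_sum_ite_mod_eq hr, add_comm (1 : R), add_pow, one_pow, mul_one,
    mul_comm]

end IsPrimitiveRoot

theorem IsPrimitiveRoot.tendsto_sum_mul_one_add_pow_div_two_pow {ζ : ℂ} {M : ℕ}
    (hζ : IsPrimitiveRoot ζ M) (hM : M ≠ 0) (c : ℕ → ℂ) :
    Tendsto (fun n => ∑ j ∈ range M, c j * ((1 + ζ ^ j) / 2) ^ n) atTop (nhds (c 0)) := by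
  obtain ⟨M, rfl⟩ := Nat.exists_eq_succ_of_ne_zero hM
  have hdecay : ∀ j ∈ range M, Tendsto (fun n => c (j + 1) * ((1 + ζ ^ (j + 1)) / 2) ^ n)
      atTop (nhds 0) := by
    intro j hj
    have hnorm : ‖(1 + ζ ^ (j + 1)) / 2‖ < 1 := by
      rw [norm_div, Complex.norm_two, div_lt_one two_pos]
      refine Complex.norm_one_add_lt_two ?_ (hζ.pow_ne_one_of_pos_of_lt j.succ_ne_zero ?_)
      · rw [norm_pow, hζ.norm'_eq_one hM, one_pow]
      · simpa using hj
    simpa using (tendsto_pow_atTop_nhds_zero_of_norm_lt_one hnorm).const_mul (c (j + 1))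
  simp_rw [sum_range_succ']
  simpa using (tendsto_finsetSum _ hdecay).add_const (c 0)

theorem binomial_residue_density_general (M : ℕ) (r : ℕ) (hr : r < M) :
    Filter.Tendsto
      (fun n : ℕ =>
        (∑ k ∈ Finset.range (n + 1), if k % M = r then ((n.choose k : ℝ)) else 0) / 2 ^ n)
      Filter.atTop (nhds (1 / M)) := by
  have hM0 : M ≠ 0 := Nat.ne_zero_of_lt hr
  have hζ := Complex.isPrimitiveRoot_exp M hM0
  set ζ := Complex.exp (2 * Real.pi * Complex.I / M)
  have hroots (n : ℕ) :
      ((∑ k ∈ range (n + 1), if k % M = r then (n.choose k : ℝ) else 0) / 2 ^ n : ℝ) =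
        ∑ j ∈ range M, (M : ℂ)⁻¹ * ζ ^ (j * (M - r)) * ((1 + ζ ^ j) / 2) ^ n := by
    have hfilter := hζ.natCast_mul_sum_choose_mod_eq hr n
    push_cast [apply_ite ((↑) : ℝ → ℂ)]
    simp_rw [div_pow, ← mul_div_assoc, ← sum_div, mul_assoc, ← mul_sum, ← hfilter,
      inv_mul_cancel_left₀ (Nat.cast_ne_zero.mpr hM0 : (M : ℂ) ≠ 0)]
  rw [← tendsto_ofReal_iff]
  simp_rw [hroots]
  simpa using
    hζ.tendsto_sum_mul_one_add_pow_div_two_pow hM0 fun j => (M : ℂ)⁻¹ * ζ ^ (j * (M - r))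

/-- Binomial coefficients equidistribute among residue classes mod M. -/
theorem binomial_residue_density (M : ℕ) (hM : 2 ≤ M) (r : ℕ) (hr : r < M) :
    Filter.Tendsto
      (fun n : ℕ =>
        (∑ k ∈ Finset.range (n + 1), if k % M = r then ((n.choose k : ℝ)) else 0) / 2 ^ n)
      Filter.atTop (nhds (1 / M)) :=
  binomial_residue_density_general M r hr
end

section
/- Let M ≥ 2 and let α = cos(π/M). Then for every r ∈ {0,...,M-1} and n ≥ 1, |(Σ_{k ≡ r mod M, 0 ≤ k ≤ n} C(n,k))/2^n − 1/M| ≤ ((M−1)/M) · α^n. -/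
/-!
With `ω = exp (2πi / M)`, the roots of unity filter gives
`M * S = ∑_{j < M} ω^(-jr) (1 + ω^j)^n`, where `S` is the sum of `C(n, k)` over `k ≡ r [MOD M]`.
The term `j = 0` is `2^n`; for `0 < j < M` one has `|1 + ω^j| = 2 |cos (πj / M)| ≤ 2 cos (π / M)`,
so `|M * S - 2^n| ≤ (M - 1) (2 cos (π / M))^n`.
-/

open Finset Real

theorem IsPrimitiveRoot.sum_pow_mul_eq_ite {R : Type*} [CommRing R] [IsDomain R] {ζ : R} {M : ℕ}
    (hζ : IsPrimitiveRoot ζ M) (m : ℕ) :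
    ∑ j ∈ range M, ζ ^ (j * m) = if M ∣ m then (M : R) else 0 := by
  simp_rw [mul_comm _ m, pow_mul]
  split_ifs with hdvd
  · simp [(hζ.pow_eq_one_iff_dvd m).mpr hdvd]
  · have hne : ζ ^ m - 1 ≠ 0 := sub_ne_zero.mpr fun h ↦ hdvd ((hζ.pow_eq_one_iff_dvd m).mp h)
    refine (mul_eq_zero.mp ?_).resolve_left hne
    rw [mul_geom_sum, ← pow_mul, mul_comm, pow_mul, hζ.pow_eq_one, one_pow, sub_self]

theorem Nat.dvd_sub_add_iff_mod_eq {M r : ℕ} (hr : r < M) (k : ℕ) :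
    M ∣ M - r + k ↔ k % M = r := by
  rw [← ZMod.natCast_eq_zero_iff, Nat.cast_add, Nat.cast_sub hr.le, ZMod.natCast_self, zero_sub,
    neg_add_eq_zero, eq_comm, ZMod.natCast_eq_natCast_iff', Nat.mod_eq_of_lt hr]

-- The factor `ζ ^ (j * (M - r))` stands for `ζ ^ (-j * r)`.
theorem IsPrimitiveRoot.sum_pow_mul_sum_eq_mul_sum_ite {R : Type*} [CommRing R] [IsDomain R]
    {ζ : R} {M r : ℕ} (hζ : IsPrimitiveRoot ζ M) (hr : r < M) (s : Finset ℕ) (f : ℕ → R) :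
    ∑ j ∈ range M, ζ ^ (j * (M - r)) * ∑ k ∈ s, ζ ^ (j * k) * f k
      = M * ∑ k ∈ s, if k % M = r then f k else 0 := by
  calc ∑ j ∈ range M, ζ ^ (j * (M - r)) * ∑ k ∈ s, ζ ^ (j * k) * f k
      = ∑ k ∈ s, (∑ j ∈ range M, ζ ^ (j * (M - r + k))) * f k := by
        simp_rw [mul_sum, sum_mul, mul_add, pow_add, mul_assoc]
        exact sum_comm
    _ = M * ∑ k ∈ s, if k % M = r then f k else 0 := by
        simp_rw [hζ.sum_pow_mul_eq_ite, Nat.dvd_sub_add_iff_mod_eq hr, mul_sum, ite_mul, zero_mul,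
          mul_ite, mul_zero]

theorem IsPrimitiveRoot.mul_sum_choose_ite_eq_sum_one_add_pow {R : Type*} [CommRing R]
    [IsDomain R] {ζ : R} {M r : ℕ} (hζ : IsPrimitiveRoot ζ M) (hr : r < M) (n : ℕ) :
    M * ∑ k ∈ range (n + 1), (if k % M = r then (n.choose k : R) else 0)
      = ∑ j ∈ range M, ζ ^ (j * (M - r)) * (1 + ζ ^ j) ^ n := by
  rw [← hζ.sum_pow_mul_sum_eq_mul_sum_ite hr]
  refine sum_congr rfl fun j _ ↦ ?_
  rw [add_comm (1 : R), add_pow]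
  simp_rw [one_pow, mul_one, pow_mul]

theorem Complex.norm_one_add_exp_mul_I (θ : ℝ) :
    ‖1 + Complex.exp (θ * Complex.I)‖ = 2 * |Real.cos (θ / 2)| := by
  have h : 1 + Complex.exp (θ * Complex.I) = -(Complex.exp (Complex.I * ↑(θ + π)) - 1) := by
    push_cast
    rw [mul_add, Complex.exp_add, mul_comm Complex.I π, Complex.exp_pi_mul_I]
    ring_nf
  rw [h, norm_neg, Complex.norm_exp_I_mul_ofReal_sub_one, add_div, Real.sin_add_pi_div_two]
  simp only [norm_mul, Real.norm_eq_abs, abs_two]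

theorem Real.abs_cos_le_cos_of_mem_Icc {a x : ℝ} (ha : 0 ≤ a) (hx : x ∈ Set.Icc a (π - a)) :
    |cos x| ≤ cos a := by
  obtain ⟨hax, hxa⟩ := hx
  rw [abs_le, neg_le, ← cos_pi_sub]
  constructor
  · exact cos_le_cos_of_nonneg_of_le_pi ha (by linarith) (by linarith)
  · exact cos_le_cos_of_nonneg_of_le_pi ha (by linarith) hax

theorem Complex.norm_one_add_exp_pow_le {M j : ℕ} (hj₀ : 0 < j) (hjM : j < M) :
    ‖1 + Complex.exp (2 * π * Complex.I / M) ^ j‖ ≤ 2 * Real.cos (π / M) := by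
  have hM : (0 : ℝ) < M := by exact_mod_cast hj₀.trans hjM
  have hexp : Complex.exp (2 * π * Complex.I / M) ^ j
      = Complex.exp ((2 * (π * j / M) : ℝ) * Complex.I) := by
    rw [← Complex.exp_nat_mul]
    push_cast
    ring_nf
  rw [hexp, Complex.norm_one_add_exp_mul_I, mul_div_cancel_left₀ _ two_ne_zero]
  gcongr
  have hj : (1 : ℝ) ≤ j := by exact_mod_cast hj₀
  have hjM' : (j : ℝ) + 1 ≤ M := by exact_mod_cast hjM
  refine abs_cos_le_cos_of_mem_Icc (by positivity) ⟨?_, ?_⟩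
  · exact div_le_div_of_nonneg_right (le_mul_of_one_le_right pi_pos.le hj) hM.le
  · rw [div_le_iff₀ hM, sub_mul, div_mul_cancel₀ _ hM.ne']
    nlinarith [pi_pos]

theorem norm_mul_sum_choose_mod_sub_two_pow_le {M r : ℕ} (hr : r < M) (n : ℕ) :
    ‖(M : ℂ) * ∑ k ∈ range (n + 1), (if k % M = r then (n.choose k : ℂ) else 0) - 2 ^ n‖
      ≤ (M - 1) * (2 * Real.cos (π / M)) ^ n := by
  have hM : 0 < M := by omega
  have hω := Complex.isPrimitiveRoot_exp M hM.ne'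
  rw [hω.mul_sum_choose_ite_eq_sum_one_add_pow hr, ← add_sum_erase _ _ (mem_range.2 hM)]
  simp only [zero_mul, pow_zero, one_mul, one_add_one_eq_two, add_sub_cancel_left]
  calc _ ≤ ∑ _j ∈ (range M).erase 0, (2 * Real.cos (π / M)) ^ n := by
        refine norm_sum_le_of_le _ fun j hj ↦ ?_
        obtain ⟨hj₀, hjM⟩ := mem_erase.1 hj
        rw [norm_mul, norm_pow, norm_pow, hω.norm'_eq_one hM.ne', one_pow, one_mul]
        exact pow_le_pow_left₀ (norm_nonneg _)
          (Complex.norm_one_add_exp_pow_le (Nat.pos_of_ne_zero hj₀) (mem_range.1 hjM)) n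
    _ = (M - 1) * (2 * Real.cos (π / M)) ^ n := by
        rw [sum_const, card_erase_of_mem (mem_range.2 hM), card_range, nsmul_eq_mul,
          Nat.cast_pred hM]

theorem binomial_residue_bound_general (M : ℕ) (r : ℕ) (hr : r < M) (n : ℕ) :
    |(∑ k ∈ Finset.range (n + 1), if k % M = r then ((n.choose k : ℝ)) else 0) / 2 ^ n
        - 1 / M| ≤ (((M : ℝ) - 1) / M) * (Real.cos (Real.pi / M)) ^ n := by
  have hM : (0 : ℝ) < M := by exact_mod_cast (Nat.zero_le r).trans_lt hr
  set S := ∑ k ∈ Finset.range (n + 1), if k % M = r then ((n.choose k : ℝ)) else 0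
  have hS : |M * S - 2 ^ n| ≤ (M - 1) * (2 * Real.cos (π / M)) ^ n := by
    rw [← Real.norm_eq_abs, ← Complex.norm_real]
    push_cast [S, apply_ite]
    exact norm_mul_sum_choose_mod_sub_two_pow_le hr n
  calc |S / 2 ^ n - 1 / M| = |M * S - 2 ^ n| / (M * 2 ^ n) := by
        rw [← abs_of_pos (by positivity : (0 : ℝ) < M * 2 ^ n), ← abs_div]
        congr 1
        field_simp
    _ ≤ (M - 1) * (2 * Real.cos (π / M)) ^ n / (M * 2 ^ n) := by gcongr
    _ = (M - 1) / M * Real.cos (π / M) ^ n := by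
        rw [mul_pow]
        field_simp

/-- Quantitative equidistribution of binomial coefficients mod M. -/
theorem binomial_residue_bound (M : ℕ) (hM : 2 ≤ M) (r : ℕ) (hr : r < M) (n : ℕ) (hn : 1 ≤ n) :
    |(∑ k ∈ Finset.range (n + 1), if k % M = r then ((n.choose k : ℝ)) else 0) / 2 ^ n
        - 1 / M| ≤ (((M : ℝ) - 1) / M) * (Real.cos (Real.pi / M)) ^ n :=
  binomial_residue_bound_general M r hr n
end

section
/- For the twisted baker map F on X = [−1,1] × [0,1]^{M−1} with M ≥ 2, the number of fixed points of F^n lying outside the set N = {x ∈ X : x₁ = −1} equals 2^n − 1 for every n ≥ 1. -/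
open MeasureTheory

/-- The twisted baker map on `[-1,1] × [0,1]^{M-1}` (coordinates indexed by `Fin M`). -/
noncomputable def twistedBaker (M : ℕ) [NeZero M] (x : Fin M → ℝ) : Fin M → ℝ :=
  if x 0 < 0 then fun i => if i = 0 then 1 + 2 * x 0 else x i
  else fun i => if i = 0 then 1 - 2 * x (i - 1) else x (i - 1)

/-- The phase space `X = [-1,1] × [0,1]^{M-1}`. -/
def bakerSpace (M : ℕ) [NeZero M] : Set (Fin M → ℝ) :=
  {x | x 0 ∈ Set.Icc (-1 : ℝ) 1 ∧ ∀ i : Fin M, i ≠ 0 → x i ∈ Set.Icc (0 : ℝ) 1}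

/-- The left half `X_L = {x ∈ X : x₁ < 0}`. -/
def bakerL (M : ℕ) [NeZero M] : Set (Fin M → ℝ) := {x ∈ bakerSpace M | x 0 < 0}

/-- The right half `X_R = {x ∈ X : x₁ ≥ 0}`. -/
def bakerR (M : ℕ) [NeZero M] : Set (Fin M → ℝ) := {x ∈ bakerSpace M | 0 ≤ x 0}

/-- Normalized Lebesgue measure on `X`. -/
noncomputable def bakerMeasure (M : ℕ) [NeZero M] : Measure (Fin M → ℝ) :=
  (volume (bakerSpace M))⁻¹ • volume.restrict (bakerSpace M)

namespace TBaux

open Function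

variable {M : ℕ} [NeZero M]

/-- Forward branch maps: `false` = left branch, `true` = right branch. -/
noncomputable def appB (b : Bool) (x : Fin M → ℝ) : Fin M → ℝ :=
  if b then fun i => if i = 0 then 1 - 2 * x (i - 1) else x (i - 1)
  else fun i => if i = 0 then 1 + 2 * x 0 else x i

/-- Inverse branch maps. -/
noncomputable def invB (b : Bool) (x : Fin M → ℝ) : Fin M → ℝ :=
  if b then fun i => if i + 1 = 0 then (1 - x 0) / 2 else x (i + 1)
  else fun i => if i = 0 then (x 0 - 1) / 2 else x i

lemma appB_false_zero (x : Fin M → ℝ) : appB false x 0 = 1 + 2 * x 0 := by simp [appB]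
lemma appB_false_ne (x : Fin M → ℝ) {i : Fin M} (hi : i ≠ 0) : appB false x i = x i := by
  simp [appB, hi]
lemma appB_true_zero (x : Fin M → ℝ) : appB true x 0 = 1 - 2 * x (0 - 1) := by simp [appB]
lemma appB_true_ne (x : Fin M → ℝ) {i : Fin M} (hi : i ≠ 0) : appB true x i = x (i - 1) := by
  simp [appB, hi]

lemma invB_false_zero (x : Fin M → ℝ) : invB false x 0 = (x 0 - 1) / 2 := by simp [invB]
lemma invB_false_ne (x : Fin M → ℝ) {i : Fin M} (hi : i ≠ 0) : invB false x i = x i := by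
  simp [invB, hi]
lemma invB_true_last (x : Fin M → ℝ) {i : Fin M} (hi : i + 1 = 0) :
    invB true x i = (1 - x 0) / 2 := by simp [invB, hi]
lemma invB_true_ne (x : Fin M → ℝ) {i : Fin M} (hi : i + 1 ≠ 0) : invB true x i = x (i + 1) := by
  simp [invB, hi]

lemma invB_appB (b : Bool) (x : Fin M → ℝ) : invB b (appB b x) = x := by
  funext i
  cases b
  · by_cases hi : i = 0
    · subst hi
      rw [invB_false_zero, appB_false_zero]; ring
    · rw [invB_false_ne _ hi, appB_false_ne _ hi]
  · by_cases hi : i + 1 = 0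
    · have hj : i = 0 - 1 := by
        have : i = -1 := eq_neg_of_add_eq_zero_left hi
        rw [this]; abel
      rw [invB_true_last _ hi, appB_true_zero, hj]; ring
    · rw [invB_true_ne _ hi, appB_true_ne _ hi]
      have e : i + 1 - 1 = i := by abel
      rw [e]

lemma appB_invB (b : Bool) (x : Fin M → ℝ) : appB b (invB b x) = x := by
  funext i
  cases b
  · by_cases hi : i = 0
    · subst hi
      rw [appB_false_zero, invB_false_zero]; ring
    · rw [appB_false_ne _ hi, invB_false_ne _ hi]
  · by_cases hi : i = 0
    · subst hi
      rw [appB_true_zero]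
      have h1 : (0 : Fin M) - 1 + 1 = 0 := by abel
      rw [invB_true_last _ h1]; ring
    · rw [appB_true_ne _ hi]
      have h1 : i - 1 + 1 ≠ 0 := by
        have : i - 1 + 1 = i := by abel
        rw [this]; exact hi
      rw [invB_true_ne _ h1]
      have e : i - 1 + 1 = i := by abel
      rw [e]

/- Fin helpers -/

lemma fin_one_ne_zero (hM : 2 ≤ M) : (1 : Fin M) ≠ 0 := by
  have h1 : (1 : Fin M).val = 1 := by
    rw [Fin.val_one']; exact Nat.mod_eq_of_lt hM
  intro h
  rw [h] at h1
  simp at h1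

lemma fin_add_one_val {j : Fin M} (h : j + 1 ≠ 0) : (j + 1).val = j.val + 1 := by
  rcases Nat.lt_or_ge 1 M with hM | hM
  · have h1 : (1 : Fin M).val = 1 := by
      rw [Fin.val_one']; exact Nat.mod_eq_of_lt hM
    have hadd : (j + 1).val = (j.val + 1) % M := by rw [Fin.val_add, h1]
    have hne : j.val + 1 ≠ M := by
      intro hE
      apply h
      apply Fin.ext
      rw [hadd, hE, Nat.mod_self, Fin.val_zero]
    have hlt : j.val + 1 < M := lt_of_le_of_ne (Nat.succ_le_of_lt j.isLt) hne
    rw [hadd, Nat.mod_eq_of_lt hlt]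
  · exfalso
    have hM1 : M = 1 := le_antisymm hM (NeZero.pos M)
    apply h
    have hlt : (j + 1).val < 1 := lt_of_lt_of_le (j + 1).isLt hM
    exact Fin.ext ((Nat.lt_one_iff.mp hlt).trans (Fin.val_zero M).symm)

lemma fin_add_one_eq_zero_iff {j : Fin M} : j + 1 = 0 ↔ j.val = M - 1 := by
  have hv : (j + 1).val = (j.val + 1 % M) % M := by rw [Fin.val_add, Fin.val_one']
  constructor
  · intro h
    rcases Nat.lt_or_ge 1 M with hM | hM
    · have h1 : 1 % M = 1 := Nat.mod_eq_of_lt hM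
      rw [h1] at hv
      have h0 : (j + 1).val = 0 := by rw [h, Fin.val_zero]
      rw [h0] at hv
      by_cases hlt : j.val + 1 < M
      · rw [Nat.mod_eq_of_lt hlt] at hv; omega
      · have := j.isLt; omega
    · have := j.isLt
      have := NeZero.pos M
      omega
  · intro h
    apply Fin.ext
    rw [hv, Fin.val_zero]
    rcases Nat.lt_or_ge 1 M with hM | hM
    · have h1 : 1 % M = 1 := Nat.mod_eq_of_lt hM
      have hE : j.val + 1 = M := by have := j.isLt; omega
      rw [h1, hE, Nat.mod_self]
    · have hM1 : M = 1 := le_antisymm hM (NeZero.pos M)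
      subst hM1
      have : j.val = 0 := by have := j.isLt; omega
      simp [this]

/- bakerSpace facts -/

lemma bakerSpace_closed : IsClosed (bakerSpace M) := by
  have he : bakerSpace M =
      Set.pi Set.univ (fun i : Fin M => if i = 0 then Set.Icc (-1:ℝ) 1 else Set.Icc 0 1) := by
    ext x
    simp only [bakerSpace, Set.mem_setOf_eq, Set.mem_pi, Set.mem_univ, forall_true_left]
    constructor
    · rintro ⟨h0, h⟩ i
      by_cases hi : i = 0
      · subst hi; simpa using h0
      · simpa [hi] using h i hi
    · intro h
      refine ⟨by simpa using h 0, fun i hi => by simpa [hi] using h i⟩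
  rw [he]
  exact isClosed_set_pi fun i _ => by split <;> exact isClosed_Icc

lemma invB_mem (hM : 2 ≤ M) (b : Bool) {x : Fin M → ℝ} (hx : x ∈ bakerSpace M) :
    invB b x ∈ bakerSpace M := by
  obtain ⟨h0, h⟩ := hx
  have h1ne : (1 : Fin M) ≠ 0 := fin_one_ne_zero hM
  cases b
  · constructor
    · rw [invB_false_zero]
      constructor
      · have := h0.1; linarith
      · have := h0.2; linarith
    · intro i hi
      rw [invB_false_ne _ hi]
      exact h i hi
  · constructor
    · have e : invB true x 0 = x 1 := by
        have h01 : (0 : Fin M) + 1 ≠ 0 := by rw [zero_add]; exact h1ne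
        rw [invB_true_ne _ h01, zero_add]
      rw [e]
      have := h 1 h1ne
      exact ⟨by linarith [this.1], this.2⟩
    · intro i hi
      by_cases hlast : i + 1 = 0
      · rw [invB_true_last _ hlast]
        constructor
        · have := h0.2; linarith
        · have := h0.1; linarith
      · rw [invB_true_ne _ hlast]
        exact h (i + 1) hlast

/- chains -/

noncomputable def chainApp : List Bool → (Fin M → ℝ) → Fin M → ℝ
  | [], x => x
  | b :: l, x => chainApp l (appB b x)

noncomputable def chainInv : List Bool → (Fin M → ℝ) → Fin M → ℝ
  | [], x => x
  | b :: l, x => invB b (chainInv l x)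

lemma chainInv_chainApp : ∀ (l : List Bool) (x : Fin M → ℝ), chainInv l (chainApp l x) = x := by
  intro l
  induction l with
  | nil => intro x; rfl
  | cons b l ih =>
    intro x
    show invB b (chainInv l (chainApp l (appB b x))) = x
    rw [ih, invB_appB]

lemma chainApp_chainInv : ∀ (l : List Bool) (x : Fin M → ℝ), chainApp l (chainInv l x) = x := by
  intro l
  induction l with
  | nil => intro x; rfl
  | cons b l ih =>
    intro x
    show chainApp l (appB b (invB b (chainInv l x))) = x
    rw [appB_invB, ih]

lemma chainApp_append : ∀ (l₁ l₂ : List Bool) (x : Fin M → ℝ),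
    chainApp (l₁ ++ l₂) x = chainApp l₂ (chainApp l₁ x) := by
  intro l₁
  induction l₁ with
  | nil => intro l₂ x; rfl
  | cons b l ih => intro l₂ x; exact ih l₂ (appB b x)

lemma chainInv_append : ∀ (l₁ l₂ : List Bool) (x : Fin M → ℝ),
    chainInv (l₁ ++ l₂) x = chainInv l₁ (chainInv l₂ x) := by
  intro l₁
  induction l₁ with
  | nil => intro l₂ x; rfl
  | cons b l ih =>
    intro l₂ x
    show invB b (chainInv (l ++ l₂) x) = _
    rw [ih]
    rfl

lemma chainInv_mem (hM : 2 ≤ M) (l : List Bool) {x : Fin M → ℝ} (hx : x ∈ bakerSpace M) :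
    chainInv l x ∈ bakerSpace M := by
  induction l with
  | nil => exact hx
  | cons b l ih => exact invB_mem hM b ih

/- Lipschitz estimates -/

lemma abs_coord_le_dist (x y : Fin M → ℝ) (i : Fin M) : |x i - y i| ≤ dist x y := by
  rw [← Real.dist_eq]; exact dist_le_pi_dist x y i

lemma chainInv_lip (l : List Bool) : ∀ (x y : Fin M → ℝ) (i : Fin M),
    |chainInv l x i - chainInv l y i| ≤ dist x y := by
  induction l with
  | nil => intro x y i; exact abs_coord_le_dist x y i
  | cons b l ih =>
    intro x y i
    have hd : (0:ℝ) ≤ dist x y := dist_nonneg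
    cases b
    · show |invB false (chainInv l x) i - invB false (chainInv l y) i| ≤ _
      by_cases hi : i = 0
      · subst hi
        rw [invB_false_zero, invB_false_zero]
        have e : (chainInv l x 0 - 1)/2 - (chainInv l y 0 - 1)/2
            = (chainInv l x 0 - chainInv l y 0)/2 := by ring
        rw [e, abs_div, abs_two]
        have := ih x y 0
        linarith
      · rw [invB_false_ne _ hi, invB_false_ne _ hi]
        exact ih x y i
    · show |invB true (chainInv l x) i - invB true (chainInv l y) i| ≤ _
      by_cases hi : i + 1 = 0
      · rw [invB_true_last _ hi, invB_true_last _ hi]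
        have e : (1 - chainInv l x 0)/2 - (1 - chainInv l y 0)/2
            = -((chainInv l x 0 - chainInv l y 0)/2) := by ring
        rw [e, abs_neg, abs_div, abs_two]
        have := ih x y 0
        linarith
      · rw [invB_true_ne _ hi, invB_true_ne _ hi]
        exact ih x y (i + 1)

lemma chainInv_contr (l : List Bool) : ∀ (x y : Fin M → ℝ) (i : Fin M),
    M ≤ l.count true + i.val →
    |chainInv l x i - chainInv l y i| ≤ dist x y / 2 := by
  induction l with
  | nil =>
    intro x y i h
    have := i.isLt
    simp [List.count_nil] at h
    omega
  | cons b l ih =>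
    intro x y i h
    cases b
    · have hc : (false :: l).count true = l.count true := by simp [List.count_cons]
      rw [hc] at h
      show |invB false (chainInv l x) i - invB false (chainInv l y) i| ≤ _
      by_cases hi : i = 0
      · subst hi
        rw [invB_false_zero, invB_false_zero]
        have e : (chainInv l x 0 - 1)/2 - (chainInv l y 0 - 1)/2
            = (chainInv l x 0 - chainInv l y 0)/2 := by ring
        rw [e, abs_div, abs_two]
        have := chainInv_lip l x y 0
        linarith
      · rw [invB_false_ne _ hi, invB_false_ne _ hi]
        exact ih x y i h
    · have hc : (true :: l).count true = l.count true + 1 := by simp [List.count_cons]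
      rw [hc] at h
      show |invB true (chainInv l x) i - invB true (chainInv l y) i| ≤ _
      by_cases hi : i + 1 = 0
      · rw [invB_true_last _ hi, invB_true_last _ hi]
        have e : (1 - chainInv l x 0)/2 - (1 - chainInv l y 0)/2
            = -((chainInv l x 0 - chainInv l y 0)/2) := by ring
        rw [e, abs_neg, abs_div, abs_two]
        have := chainInv_lip l x y 0
        linarith
      · rw [invB_true_ne _ hi, invB_true_ne _ hi]
        apply ih x y (i + 1)
        rw [fin_add_one_val hi]
        omega

lemma chainInv_contracting (l : List Bool) (hl : M ≤ l.count true) :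
    ContractingWith (1/2 : NNReal) (chainInv (M := M) l) := by
  refine ⟨by rw [← NNReal.coe_lt_coe]; norm_num, LipschitzWith.of_dist_le_mul fun x y => ?_⟩
  have h2 : ((1/2 : NNReal) : ℝ) * dist x y = dist x y / 2 := by
    push_cast; ring
  rw [h2, dist_pi_le_iff (by positivity)]
  intro i
  rw [Real.dist_eq]
  exact chainInv_contr l x y i (le_trans hl (Nat.le_add_right _ _))

/- repetition -/

def rep : ℕ → List Bool → List Bool
  | 0, _ => []
  | k + 1, l => l ++ rep k l

lemma chainInv_rep : ∀ (k : ℕ) (l : List Bool) (x : Fin M → ℝ),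
    chainInv (rep k l) x = (chainInv l)^[k] x := by
  intro k
  induction k with
  | zero => intro l x; rfl
  | succ k ih =>
    intro l x
    show chainInv (l ++ rep k l) x = _
    rw [chainInv_append, ih, ← Function.iterate_succ_apply' (chainInv l) k x]

lemma count_rep : ∀ (k : ℕ) (l : List Bool), (rep k l).count true = k * l.count true := by
  intro k
  induction k with
  | zero => intro l; simp [rep]
  | succ k ih =>
    intro l
    show (l ++ rep k l).count true = _
    rw [List.count_append, ih]
    ring

/- orbits -/

noncomputable def orb (wseq : ℕ → Bool) (x : Fin M → ℝ) : ℕ → Fin M → ℝ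
  | 0 => x
  | t + 1 => appB (wseq t) (orb wseq x t)

lemma orb_succ (wseq : ℕ → Bool) (x : Fin M → ℝ) (t : ℕ) :
    orb wseq x (t + 1) = appB (wseq t) (orb wseq x t) := rfl

lemma orb_backstep (wseq : ℕ → Bool) (x : Fin M → ℝ) (t : ℕ) :
    orb wseq x t = invB (wseq t) (orb wseq x (t + 1)) := by
  rw [orb_succ, invB_appB]

lemma orb_chainApp (wseq : ℕ → Bool) (x : Fin M → ℝ) : ∀ t,
    orb wseq x t = chainApp ((List.range t).map wseq) x := by
  intro t
  induction t with
  | zero => rfl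
  | succ t ih =>
    rw [List.range_succ, List.map_append, chainApp_append, ← ih]
    rfl

section OrbLemmas

variable {n : ℕ} (wseq : ℕ → Bool) (x : Fin M → ℝ)

lemma orb_n (hfa : chainApp ((List.range n).map wseq) x = x) : orb wseq x n = x := by
  rw [orb_chainApp, hfa]

lemma orb_periodic (hper : ∀ t, wseq (t + n) = wseq t)
    (hfa : chainApp ((List.range n).map wseq) x = x) :
    ∀ t, orb wseq x (t + n) = orb wseq x t := by
  intro t
  induction t with
  | zero =>
    show orb wseq x (0 + n) = x
    rw [Nat.zero_add]
    exact orb_n wseq x hfa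
  | succ t ih =>
    have e : t + 1 + n = (t + n) + 1 := by omega
    rw [e, orb_succ, orb_succ, hper t, ih]

lemma orb_add_mul (hper : ∀ t, wseq (t + n) = wseq t)
    (hfa : chainApp ((List.range n).map wseq) x = x) :
    ∀ (c t : ℕ), orb wseq x (t + c * n) = orb wseq x t := by
  intro c
  induction c with
  | zero => intro t; simp
  | succ c ih =>
    intro t
    have e : t + (c + 1) * n = (t + c * n) + n := by ring
    rw [e, orb_periodic wseq x hper hfa, ih]

lemma wseq_add_mul (hper : ∀ t, wseq (t + n) = wseq t) :
    ∀ (c t : ℕ), wseq (t + c * n) = wseq t := by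
  intro c
  induction c with
  | zero => intro t; simp
  | succ c ih =>
    intro t
    have e : t + (c + 1) * n = (t + c * n) + n := by ring
    rw [e, hper, ih]

lemma orb_mem_of (hM : 2 ≤ M) : ∀ (s t : ℕ),
    orb wseq x (t + s) ∈ bakerSpace M → orb wseq x t ∈ bakerSpace M := by
  intro s
  induction s with
  | zero => intro t h; simpa using h
  | succ s ih =>
    intro t h
    apply ih t
    rw [orb_backstep]
    exact invB_mem hM _ h

lemma orb_mem (hn : 0 < n) (hM : 2 ≤ M) (hper : ∀ t, wseq (t + n) = wseq t)
    (hfa : chainApp ((List.range n).map wseq) x = x) (hx : x ∈ bakerSpace M) :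
    ∀ t, orb wseq x t ∈ bakerSpace M := by
  intro t
  have hle : t ≤ t * n := Nat.le_mul_of_pos_right t hn
  apply orb_mem_of wseq x hM (t * n - t) t
  have e : t + (t * n - t) = 0 + t * n := by omega
  rw [e, orb_add_mul wseq x hper hfa t 0]
  exact hx

lemma exR (hn : 0 < n) (hper : ∀ t, wseq (t + n) = wseq t) (hsome : ∃ s, wseq s = true) :
    ∀ t, ∃ d, wseq (t + d) = true := by
  obtain ⟨s, hs⟩ := hsome
  have hsmod : wseq (s % n) = true := by
    have h := Nat.div_add_mod s n
    have e : s % n + (s / n) * n = s := by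
      rw [Nat.mul_comm] at h
      omega
    rw [← e] at hs
    rwa [wseq_add_mul wseq hper] at hs
  intro t
  have hmod := Nat.div_add_mod t n
  have hmlt : t % n < n := Nat.mod_lt t hn
  have h2 : (t / n + 1) * n = n * (t / n) + n := by ring
  have hle : t ≤ s % n + (t / n + 1) * n := by omega
  refine ⟨s % n + (t / n + 1) * n - t, ?_⟩
  have e : t + (s % n + (t / n + 1) * n - t) = s % n + (t / n + 1) * n := by omega
  rw [e, wseq_add_mul wseq hper]
  exact hsmod

/-- the orbit never has first coordinate `-1`. -/
lemma orb_ne_neg_one (hM : 2 ≤ M)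
    (hmem : ∀ t, orb wseq x t ∈ bakerSpace M)
    (hexR : ∀ t, ∃ d, wseq (t + d) = true) :
    ∀ t, orb wseq x t 0 ≠ -1 := by
  intro t h
  have key : ∀ d, orb wseq x (t + d) 0 = -1 := by
    intro d
    induction d with
    | zero => simpa using h
    | succ d ih =>
      have e : t + (d + 1) = (t + d) + 1 := by omega
      rw [e, orb_succ]
      cases hw : wseq (t + d)
      · rw [appB_false_zero, ih]; ring
      · exfalso
        have h1 : orb wseq x (t + d + 1) 1 = -1 := by
          rw [orb_succ, hw, appB_true_ne _ (fin_one_ne_zero hM), sub_self, ih]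
        have := (hmem (t + d + 1)).2 1 (fin_one_ne_zero hM)
        rw [h1] at this
        linarith [this.1]
  obtain ⟨d, hd⟩ := hexR t
  have h1 : orb wseq x (t + d + 1) 1 = -1 := by
    rw [orb_succ, hd, appB_true_ne _ (fin_one_ne_zero hM), sub_self, key d]
  have := (hmem (t + d + 1)).2 1 (fin_one_ne_zero hM)
  rw [h1] at this
  linarith [this.1]

/-- propagate a coordinate equal to `1` to the next `R` time. -/
lemma next_R (hexR : ∀ t, ∃ d, wseq (t + d) = true)
    (t : ℕ) (j : Fin M) (hj : j ≠ 0) (h1 : orb wseq x t j = 1) :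
    ∃ u, wseq u = true ∧ orb wseq x u j = 1 := by
  have hex := hexR t
  set d0 := Nat.find hex with hd0
  have hspec : wseq (t + d0) = true := Nat.find_spec hex
  have hstay : ∀ e, e ≤ d0 → orb wseq x (t + e) j = 1 := by
    intro e
    induction e with
    | zero => intro _; simpa using h1
    | succ e ih =>
      intro he
      have hlt : e < d0 := by omega
      have hfalse : wseq (t + e) = false := by
        have := Nat.find_min hex hlt
        simpa using this
      have e2 : t + (e + 1) = (t + e) + 1 := by omega
      rw [e2, orb_succ, hfalse, appB_false_ne _ hj]
      exact ih (by omega)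
  exact ⟨t + d0, hspec, hstay d0 le_rfl⟩

/-- the orbit never has a non-head coordinate equal to `1`. -/
lemma orb_ne_one (hM : 2 ≤ M)
    (hmem : ∀ t, orb wseq x t ∈ bakerSpace M)
    (hexR : ∀ t, ∃ d, wseq (t + d) = true) :
    ∀ (t : ℕ) (j : Fin M), j ≠ 0 → orb wseq x t j ≠ 1 := by
  suffices hsuf : ∀ (c t : ℕ) (j : Fin M), j ≠ 0 → M - 1 - j.val ≤ c → orb wseq x t j ≠ 1 by
    intro t j hj
    exact hsuf (M - 1 - j.val) t j hj le_rfl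
  intro c
  induction c with
  | zero =>
    intro t j hj hc h1
    obtain ⟨u, hu, h1u⟩ := next_R wseq x hexR t j hj h1
    have hjlast : j + 1 = 0 := by
      rw [fin_add_one_eq_zero_iff]
      have := j.isLt
      omega
    have hj' : j = 0 - 1 := by
      have : j = -1 := eq_neg_of_add_eq_zero_left hjlast
      rw [this]; abel
    have hbad : orb wseq x (u + 1) 0 = -1 := by
      rw [orb_succ, hu, appB_true_zero, ← hj', h1u]
      ring
    exact orb_ne_neg_one wseq x hM hmem hexR (u + 1) hbad
  | succ c ih =>
    intro t j hj hc h1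
    obtain ⟨u, hu, h1u⟩ := next_R wseq x hexR t j hj h1
    by_cases hjlast : j + 1 = 0
    · have hj' : j = 0 - 1 := by
        have : j = -1 := eq_neg_of_add_eq_zero_left hjlast
        rw [this]; abel
      have hbad : orb wseq x (u + 1) 0 = -1 := by
        rw [orb_succ, hu, appB_true_zero, ← hj', h1u]
        ring
      exact orb_ne_neg_one wseq x hM hmem hexR (u + 1) hbad
    · have hnext : orb wseq x (u + 1) (j + 1) = 1 := by
        have e : j + 1 - 1 = j := by abel
        rw [orb_succ, hu, appB_true_ne _ hjlast, e]
        exact h1u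
      apply ih (u + 1) (j + 1) hjlast _ hnext
      rw [fin_add_one_val hjlast]
      omega

/-- the orbit never has first coordinate `1`. -/
lemma orb_zero_ne_one (hM : 2 ≤ M)
    (hmem : ∀ t, orb wseq x t ∈ bakerSpace M)
    (hexR : ∀ t, ∃ d, wseq (t + d) = true) :
    ∀ t, orb wseq x t 0 ≠ 1 := by
  intro t h
  cases hw : wseq t
  · have h3 : orb wseq x (t + 1) 0 = 3 := by
      rw [orb_succ, hw, appB_false_zero, h]; ring
    have := (hmem (t + 1)).1.2
    rw [h3] at this
    linarith
  · have h1 : orb wseq x (t + 1) 1 = 1 := by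
      rw [orb_succ, hw, appB_true_ne _ (fin_one_ne_zero hM), sub_self]
      exact h
    exact orb_ne_one wseq x hM hmem hexR (t + 1) 1 (fin_one_ne_zero hM) h1

lemma orb_sign (hM : 2 ≤ M)
    (hmem : ∀ t, orb wseq x t ∈ bakerSpace M)
    (hexR : ∀ t, ∃ d, wseq (t + d) = true) (t : ℕ) :
    (wseq t = false → orb wseq x t 0 < 0) ∧ (wseq t = true → 0 ≤ orb wseq x t 0) := by
  constructor
  · intro hw
    have hb : orb wseq x t 0 = (orb wseq x (t + 1) 0 - 1) / 2 := by
      rw [orb_backstep wseq x t, hw, invB_false_zero]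
    have hle : orb wseq x (t + 1) 0 ≤ 1 := (hmem (t + 1)).1.2
    have hne : orb wseq x (t + 1) 0 ≠ 1 := orb_zero_ne_one wseq x hM hmem hexR (t + 1)
    have hlt : orb wseq x (t + 1) 0 < 1 := lt_of_le_of_ne hle hne
    rw [hb]; linarith
  · intro hw
    have h01 : (0 : Fin M) + 1 ≠ 0 := by rw [zero_add]; exact fin_one_ne_zero hM
    have hb : orb wseq x t 0 = orb wseq x (t + 1) 1 := by
      rw [orb_backstep wseq x t, hw, invB_true_ne _ h01, zero_add]
    rw [hb]
    exact ((hmem (t + 1)).2 1 (fin_one_ne_zero hM)).1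

lemma tb_of_neg {y : Fin M → ℝ} (h : y 0 < 0) : twistedBaker M y = appB false y := by
  simp only [twistedBaker, appB, if_pos h]
  rfl

lemma tb_of_nonneg {y : Fin M → ℝ} (h : 0 ≤ y 0) : twistedBaker M y = appB true y := by
  simp only [twistedBaker, appB, if_neg (not_lt.2 h)]
  rfl

lemma iterate_eq_orb (hM : 2 ≤ M)
    (hmem : ∀ t, orb wseq x t ∈ bakerSpace M)
    (hexR : ∀ t, ∃ d, wseq (t + d) = true) :
    ∀ t, (twistedBaker M)^[t] x = orb wseq x t := by
  intro t
  induction t with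
  | zero => rfl
  | succ t ih =>
    rw [Function.iterate_succ_apply', ih, orb_succ]
    cases hw : wseq t
    · rw [tb_of_neg ((orb_sign wseq x hM hmem hexR t).1 hw)]
    · rw [tb_of_nonneg ((orb_sign wseq x hM hmem hexR t).2 hw)]

end OrbLemmas

/- main existence theorem -/

theorem exists_good (hM : 2 ≤ M) {n : ℕ} (hn : 0 < n) (wseq : ℕ → Bool)
    (hper : ∀ t, wseq (t + n) = wseq t) (hsome : ∃ s, wseq s = true) :
    ∃ x : Fin M → ℝ, x ∈ bakerSpace M ∧ x 0 ≠ -1 ∧ (twistedBaker M)^[n] x = x ∧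
      ∀ t : ℕ, (0 ≤ (twistedBaker M)^[t] x 0 ↔ wseq t = true) := by
  classical
  set l : List Bool := (List.range n).map wseq with hl
  have hcount : 0 < l.count true := by
    rw [List.count_pos_iff]
    obtain ⟨s, hs⟩ := hsome
    have hsmod : wseq (s % n) = true := by
      have h := Nat.div_add_mod s n
      have e : s % n + (s / n) * n = s := by
        rw [Nat.mul_comm] at h
        omega
      rw [← e] at hs
      rwa [wseq_add_mul wseq hper] at hs
    exact List.mem_map.2 ⟨s % n, List.mem_range.2 (Nat.mod_lt s hn), hsmod⟩
  have hcw : ContractingWith (1/2 : NNReal) (chainInv (M := M) (rep M l)) := by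
    apply chainInv_contracting
    rw [count_rep]
    calc M = M * 1 := (Nat.mul_one M).symm
    _ ≤ M * l.count true := Nat.mul_le_mul_left M hcount
  set x : Fin M → ℝ := ContractingWith.fixedPoint (chainInv (rep M l)) hcw with hx
  have hfixg : Function.IsFixedPt (chainInv (rep M l)) x :=
    ContractingWith.fixedPoint_isFixedPt hcw
  have hfixf : chainInv l x = x := by
    have h1 : Function.IsFixedPt (chainInv (rep M l)) (chainInv l x) := by
      show chainInv (rep M l) (chainInv l x) = chainInv l x
      calc chainInv (rep M l) (chainInv l x)
          = (chainInv l)^[M] (chainInv l x) := chainInv_rep M l _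
        _ = (chainInv l)^[M + 1] x := (Function.iterate_succ_apply (chainInv l) M x).symm
        _ = chainInv l ((chainInv l)^[M] x) := Function.iterate_succ_apply' (chainInv l) M x
        _ = chainInv l (chainInv (rep M l) x) := by rw [chainInv_rep]
        _ = chainInv l x := by rw [hfixg]
    exact (hcw.fixedPoint_unique h1).trans (hcw.fixedPoint_unique hfixg).symm
  have hfa : chainApp l x = x := by
    have h1 := congrArg (chainApp l) hfixf
    exact h1.symm.trans (chainApp_chainInv l x)
  have hmemX : x ∈ bakerSpace M := by
    have h0 : (fun _ => (0:ℝ)) ∈ bakerSpace M := by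
      constructor
      · norm_num
      · intro i _; norm_num
    have hinv : ∀ k, (chainInv (rep M l))^[k] (fun _ => (0:ℝ)) ∈ bakerSpace M := by
      intro k
      induction k with
      | zero => exact h0
      | succ k ih =>
        rw [Function.iterate_succ_apply']
        exact chainInv_mem hM _ ih
    exact bakerSpace_closed.mem_of_tendsto (hcw.tendsto_iterate_fixedPoint _)
      (Filter.Eventually.of_forall hinv)
  have hmem : ∀ t, orb wseq x t ∈ bakerSpace M := orb_mem wseq x hn hM hper hfa hmemX
  have hexR : ∀ t, ∃ d, wseq (t + d) = true := exR wseq hn hper hsome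
  have hit : ∀ t, (twistedBaker M)^[t] x = orb wseq x t :=
    iterate_eq_orb wseq x hM hmem hexR
  refine ⟨x, hmemX, ?_, ?_, ?_⟩
  · exact orb_ne_neg_one wseq x hM hmem hexR 0
  · rw [hit n, orb_n wseq x hfa]
  · intro t
    rw [hit t]
    constructor
    · intro h
      cases hw : wseq t
      · exact absurd h (not_le.2 ((orb_sign wseq x hM hmem hexR t).1 hw))
      · rfl
    · intro h
      exact (orb_sign wseq x hM hmem hexR t).2 h

/- uniqueness -/

theorem unique_fix (l : List Bool) (hl : 0 < l.count true) {x y : Fin M → ℝ}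
    (hx : chainApp l x = x) (hy : chainApp l y = y) : x = y := by
  have hcw : ContractingWith (1/2 : NNReal) (chainInv (M := M) (rep M l)) := by
    apply chainInv_contracting
    rw [count_rep]
    calc M = M * 1 := (Nat.mul_one M).symm
    _ ≤ M * l.count true := Nat.mul_le_mul_left M hl
  have hfx : Function.IsFixedPt (chainInv l) x := by
    show chainInv l x = x
    conv_lhs => rw [← hx]
    exact chainInv_chainApp l x
  have hfy : Function.IsFixedPt (chainInv l) y := by
    show chainInv l y = y
    conv_lhs => rw [← hy]
    exact chainInv_chainApp l y
  have hgx : Function.IsFixedPt (chainInv (rep M l)) x := by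
    show chainInv (rep M l) x = x
    rw [chainInv_rep]
    exact hfx.iterate M
  have hgy : Function.IsFixedPt (chainInv (rep M l)) y := by
    show chainInv (rep M l) y = y
    rw [chainInv_rep]
    exact hfy.iterate M
  exact (hcw.fixedPoint_unique hgx).trans (hcw.fixedPoint_unique hgy).symm

/- the itinerary of an actual fixed point -/

theorem fix_chainApp {n : ℕ} (x : Fin M → ℝ) (hfix : (twistedBaker M)^[n] x = x) :
    chainApp ((List.range n).map (fun t => decide (0 ≤ (twistedBaker M)^[t] x 0))) x = x := by
  classical
  have key : ∀ t, chainApp ((List.range t).map (fun t => decide (0 ≤ (twistedBaker M)^[t] x 0))) x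
      = (twistedBaker M)^[t] x := by
    intro t
    induction t with
    | zero => rfl
    | succ t ih =>
      rw [List.range_succ, List.map_append, chainApp_append, ih]
      show chainApp [decide (0 ≤ (twistedBaker M)^[t] x 0)] ((twistedBaker M)^[t] x) = _
      have e : chainApp [decide (0 ≤ (twistedBaker M)^[t] x 0)] ((twistedBaker M)^[t] x)
          = appB (decide (0 ≤ (twistedBaker M)^[t] x 0)) ((twistedBaker M)^[t] x) := rfl
      rw [e, Function.iterate_succ_apply']
      by_cases h : 0 ≤ (twistedBaker M)^[t] x 0
      · rw [decide_eq_true h, tb_of_nonneg h]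
      · rw [decide_eq_false h, tb_of_neg (not_le.1 h)]
  rw [key n, hfix]

/- the all-left itinerary forces x 0 = -1 -/

theorem allL {n : ℕ} (hn : 0 < n) (x : Fin M → ℝ)
    (h : ∀ t < n, ¬ (0 ≤ (twistedBaker M)^[t] x 0))
    (hfix : (twistedBaker M)^[n] x = x) : x 0 = -1 := by
  have key : ∀ t ≤ n, (twistedBaker M)^[t] x 0 = 2 ^ t * (x 0 + 1) - 1 := by
    intro t
    induction t with
    | zero => intro _; simp
    | succ t ih =>
      intro ht
      have hlt : t < n := by omega
      have hneg : (twistedBaker M)^[t] x 0 < 0 := not_le.1 (h t hlt)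
      rw [Function.iterate_succ_apply', tb_of_neg hneg, appB_false_zero, ih (by omega)]
      ring
  have hend := key n le_rfl
  rw [hfix] at hend
  have h2 : (2:ℝ) ^ n * (x 0 + 1) = x 0 + 1 := by linarith
  have h3 : ((2:ℝ) ^ n - 1) * (x 0 + 1) = 0 := by linarith
  have h4 : (2:ℝ) ^ n - 1 ≠ 0 := by
    have : (2:ℝ) ^ 1 ≤ 2 ^ n := pow_le_pow_right₀ (by norm_num) hn
    simp at this
    intro hE
    nlinarith
  have h5 : x 0 + 1 = 0 := by
    rcases mul_eq_zero.1 h3 with h | h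
    · exact absurd h h4
    · exact h
  linarith

end TBaux

/-- The number of fixed points of `F^n` outside `N = {x : x₁ = -1}` is `2^n - 1`. -/
theorem card_fix_twistedBaker (M : ℕ) [NeZero M] (hM : 2 ≤ M) (n : ℕ) (hn : 1 ≤ n) :
    Nat.card {x : Fin M → ℝ //
      x ∈ bakerSpace M ∧ x 0 ≠ -1 ∧ (twistedBaker M)^[n] x = x} = 2 ^ n - 1 := by
  classical
  have hn0 : 0 < n := hn
  have hΨ : ∀ x : {x : Fin M → ℝ // x ∈ bakerSpace M ∧ x 0 ≠ -1 ∧ (twistedBaker M)^[n] x = x},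
      ¬ ((fun t : Fin n => decide (0 ≤ (twistedBaker M)^[(t : ℕ)] x.1 0))
        = fun _ => false) := by
    rintro ⟨x, hmem, hne, hfix⟩ hconst
    apply hne
    apply TBaux.allL hn0 x _ hfix
    intro t ht hc
    have h1 := congrFun hconst ⟨t, ht⟩
    simp only [decide_eq_true hc] at h1
    exact Bool.noConfusion h1
  set Ψ : {x : Fin M → ℝ // x ∈ bakerSpace M ∧ x 0 ≠ -1 ∧ (twistedBaker M)^[n] x = x} →
      {w : Fin n → Bool // ¬ (w = fun _ => false)} :=
    fun x => ⟨fun t : Fin n => decide (0 ≤ (twistedBaker M)^[(t : ℕ)] x.1 0), hΨ x⟩ with hΨdef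
  have hbij : Function.Bijective Ψ := by
    constructor
    · rintro ⟨x, hx⟩ ⟨y, hy⟩ h
      have hw : (fun t : Fin n => decide (0 ≤ (twistedBaker M)^[(t : ℕ)] x 0))
          = (fun t : Fin n => decide (0 ≤ (twistedBaker M)^[(t : ℕ)] y 0)) :=
        congrArg Subtype.val h
      have hlists : (List.range n).map (fun t => decide (0 ≤ (twistedBaker M)^[t] x 0))
          = (List.range n).map (fun t => decide (0 ≤ (twistedBaker M)^[t] y 0)) := by
        apply List.map_congr_left
        intro a ha
        exact congrFun hw ⟨a, List.mem_range.1 ha⟩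
      have hcount : 0 < ((List.range n).map
          (fun t => decide (0 ≤ (twistedBaker M)^[t] x 0))).count true := by
        rw [List.count_pos_iff]
        have hex : ∃ t : Fin n, decide (0 ≤ (twistedBaker M)^[(t : ℕ)] x 0) = true := by
          by_contra hno
          push_neg at hno
          apply hΨ ⟨x, hx⟩
          funext t
          exact Bool.eq_false_iff.2 (hno t)
        obtain ⟨t, ht⟩ := hex
        exact List.mem_map.2 ⟨(t : ℕ), List.mem_range.2 t.isLt, ht⟩
      have hfx := TBaux.fix_chainApp (M := M) x hx.2.2
      have hfy := TBaux.fix_chainApp (M := M) y hy.2.2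
      rw [← hlists] at hfy
      exact Subtype.ext (TBaux.unique_fix _ hcount hfx hfy)
    · rintro ⟨w, hwne⟩
      set wseq : ℕ → Bool := fun t => w ⟨t % n, Nat.mod_lt t hn0⟩ with hwseq
      have hval : ∀ t : Fin n, wseq (t : ℕ) = w t := by
        intro t
        show w ⟨(t : ℕ) % n, _⟩ = w t
        congr 1
        exact Fin.ext (Nat.mod_eq_of_lt t.isLt)
      have hper : ∀ t, wseq (t + n) = wseq t := by
        intro t
        show w ⟨(t + n) % n, _⟩ = w ⟨t % n, _⟩
        congr 1
        exact Fin.ext (Nat.add_mod_right t n)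
      have hsome : ∃ s, wseq s = true := by
        have hex : ∃ t : Fin n, w t = true := by
          by_contra hno
          push_neg at hno
          apply hwne
          funext t
          exact Bool.eq_false_iff.2 (hno t)
        obtain ⟨t, ht⟩ := hex
        exact ⟨(t : ℕ), by rw [hval t, ht]⟩
      obtain ⟨x, hmem, hne, hfix, hiff⟩ := TBaux.exists_good hM hn0 wseq hper hsome
      refine ⟨⟨x, hmem, hne, hfix⟩, ?_⟩
      apply Subtype.ext
      funext t
      show decide (0 ≤ (twistedBaker M)^[(t : ℕ)] x 0) = w t
      cases hb : w t
      · apply decide_eq_false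
        intro hc
        have h1 := (hiff (t : ℕ)).1 hc
        rw [hval t, hb] at h1
        exact Bool.false_ne_true h1
      · exact decide_eq_true ((hiff (t : ℕ)).2 (by rw [hval t, hb]))
  rw [Nat.card_eq_of_bijective Ψ hbij, Nat.card_eq_fintype_card,
    Fintype.card_subtype_compl, Fintype.card_subtype_eq, Fintype.card_fun]
  simp
end

section
/- The twisted baker map F preserves the normalized Lebesgue measure m on X = [−1,1] × [0,1]^{M−1}; that is, m(F^{-1}(A)) = m(A) for every Borel set A ⊆ X. -/
/-!
Both branches `L` (on `x₁ < 0`) and `R` (on `x₁ ≥ 0`) of the twisted baker map are affine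
maps of `ℝ^M` with Jacobian `±2` (for `R`: a cyclic shift of coordinates followed by an affine
change of the first one), so each halves the Lebesgue measure of preimages. For `A ⊆ X`, a point
of `L⁻¹A` has `x₁ ≤ 0` and a point of `R⁻¹A` has `x₁ ≥ 0`; hence, up to the null hyperplane
`x₁ = 0`, `F⁻¹A` is the disjoint union of `L⁻¹A` and `R⁻¹A`, has volume `vol A / 2 + vol A / 2`,
and lies in `X`, so restricting Lebesgue measure to `X` changes neither side.
-/

open MeasureTheory

open Set

section

variable {ι : Type*} [Fintype ι]

theorem volume_preimage_comp_equiv (e : ι ≃ ι) (s : Set (ι → ℝ)) :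
    volume ((fun x : ι → ℝ => x ∘ e) ⁻¹' s) = volume s :=
  (volume_preserving_arrowCongr' e.symm (MeasurableEquiv.refl ℝ) (.id _)).measure_preimage_emb
    (MeasurableEquiv.measurableEmbedding _) s

theorem volume_setOf_apply_eq (i : ι) (c : ℝ) : volume {x : ι → ℝ | x i = c} = 0 :=
  Measure.pi_eval_preimage_null (μ := fun _ : ι => (volume : Measure ℝ)) (measure_singleton c)

theorem volume_preimage_update_affine [DecidableEq ι] (i : ι) {a : ℝ} (ha : a ≠ 0) (b : ℝ)
    (s : Set (ι → ℝ)) :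
    volume ((fun x : ι → ℝ => Function.update x i (b + a * x i)) ⁻¹' s)
      = ENNReal.ofReal |a⁻¹| * volume s := by
  set D := Matrix.toLin' (Matrix.diagonal (Function.update 1 i a))
  have hdet : LinearMap.det D = a := by
    simp [D, Finset.prod_update_of_mem]
  have hmap : (fun x : ι → ℝ => Function.update x i (b + a * x i)) = (· + Pi.single i b) ∘ D := by
    funext x j
    obtain rfl | hj := eq_or_ne j i
    · simp [D, Matrix.mulVec_diagonal, add_comm]
    · simp [D, Matrix.mulVec_diagonal, hj]
  rw [hmap, preimage_comp, Measure.addHaar_preimage_linearMap _ (hdet ▸ ha), hdet,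
    measure_preimage_add_right]

end

section

variable {M : ℕ} [NeZero M]

variable (M) in
def bakerLeft (x : Fin M → ℝ) : Fin M → ℝ :=
  Function.update x 0 (1 + 2 * x 0)

variable (M) in
/-- `-1 : Fin M` is the last index, so this is `(1 - 2 x_M, x_1, …, x_{M-1})`. -/
def bakerRight (x : Fin M → ℝ) : Fin M → ℝ :=
  Function.update (x ∘ Equiv.subRight 1) 0 (1 - 2 * x (-1))

variable (M) in
theorem twistedBaker_eq_piecewise :
    twistedBaker M = {x | x 0 < 0}.piecewise (bakerLeft M) (bakerRight M) := by
  funext x i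
  by_cases hx : x 0 < 0 <;> by_cases hi : i = 0 <;>
    simp [twistedBaker, bakerLeft, bakerRight, piecewise, hx, hi]

theorem volume_preimage_bakerLeft (s : Set (Fin M → ℝ)) :
    volume (bakerLeft M ⁻¹' s) = 2⁻¹ * volume s :=
  (volume_preimage_update_affine 0 two_ne_zero 1 s).trans (by simp [ENNReal.ofReal_inv_of_pos])

theorem volume_preimage_bakerRight (s : Set (Fin M → ℝ)) :
    volume (bakerRight M ⁻¹' s) = 2⁻¹ * volume s := by
  have hmap : bakerRight M
      = (fun y => Function.update y 0 (1 + -2 * y 0)) ∘ (fun x => x ∘ Equiv.subRight 1) := by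
    funext x
    simp [bakerRight, sub_eq_add_neg]
  rw [hmap, preimage_comp, volume_preimage_comp_equiv,
    volume_preimage_update_affine 0 (by norm_num : (-2 : ℝ) ≠ 0)]
  simp [ENNReal.ofReal_inv_of_pos]

theorem measurableSet_bakerSpace : MeasurableSet (bakerSpace M) := by
  unfold bakerSpace
  measurability

theorem mem_bakerSpace_of_bakerLeft_mem {x : Fin M → ℝ} (h : bakerLeft M x ∈ bakerSpace M) :
    x ∈ bakerSpace M ∧ x 0 ≤ 0 := by
  obtain ⟨⟨h0, h1⟩, hi⟩ := h
  simp only [bakerLeft, Function.update_self] at h0 h1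
  refine ⟨⟨⟨by linarith, by linarith⟩, fun i hi0 => ?_⟩, by linarith⟩
  simpa [bakerLeft, hi0] using hi i hi0

theorem mem_bakerR_of_bakerRight_mem {x : Fin M → ℝ} (h : bakerRight M x ∈ bakerSpace M) :
    x ∈ bakerR M := by
  have hx : ∀ j, x j ∈ Icc (0 : ℝ) 1 := by
    intro j
    by_cases hj : j + 1 = 0
    · obtain ⟨h0, h1⟩ := h.1
      simp only [bakerRight, Function.update_self] at h0 h1
      rw [eq_neg_of_add_eq_zero_left hj]
      constructor <;> linarith
    · simpa [bakerRight, hj] using h.2 (j + 1) hj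
  exact ⟨⟨⟨by linarith [(hx 0).1], (hx 0).2⟩, fun i _ => hx i⟩, (hx 0).1⟩

theorem twistedBaker_preimage_subset {A : Set (Fin M → ℝ)} (hA : A ⊆ bakerSpace M) :
    twistedBaker M ⁻¹' A ⊆ bakerSpace M := by
  rw [twistedBaker_eq_piecewise, piecewise_preimage]
  rintro x (⟨hx, -⟩ | ⟨hx, -⟩)
  · exact (mem_bakerSpace_of_bakerLeft_mem (hA hx)).1
  · exact (mem_bakerR_of_bakerRight_mem (hA hx)).1

theorem volume_preimage_twistedBaker {A : Set (Fin M → ℝ)} (hA : A ⊆ bakerSpace M) :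
    volume (twistedBaker M ⁻¹' A) = volume A := by
  have hleft : twistedBaker M ⁻¹' A ∩ {x | x 0 < 0} = bakerLeft M ⁻¹' A \ {x | x 0 = 0} := by
    rw [twistedBaker_eq_piecewise, piecewise_preimage, ite_inter_self]
    ext x
    simp only [mem_inter_iff, mem_sdiff, mem_preimage, mem_ofPred_eq]
    refine and_congr_right fun hx => ⟨ne_of_lt, fun hne => ?_⟩
    exact lt_of_le_of_ne (mem_bakerSpace_of_bakerLeft_mem (hA hx)).2 hne
  have hright : twistedBaker M ⁻¹' A \ {x | x 0 < 0} = bakerRight M ⁻¹' A := by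
    rw [twistedBaker_eq_piecewise, piecewise_preimage, ite_sdiff_self, sdiff_eq_left]
    exact disjoint_left.2 fun x hx => not_lt.2 (mem_bakerR_of_bakerRight_mem (hA hx)).2
  rw [← measure_inter_add_sdiff _ (measurableSet_lt (measurable_pi_apply 0) measurable_const),
    hleft, hright, measure_sdiff_null (volume_setOf_apply_eq 0 0), volume_preimage_bakerLeft,
    volume_preimage_bakerRight, ← add_mul, ENNReal.inv_two_add_inv_two, one_mul]

end

theorem twistedBaker_measurePreserving_general (M : ℕ) [NeZero M]
    (A : Set (Fin M → ℝ)) (hA : A ⊆ bakerSpace M) :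
    bakerMeasure M (twistedBaker M ⁻¹' A) = bakerMeasure M A := by
  simp only [bakerMeasure, Measure.smul_apply, smul_eq_mul,
    Measure.restrict_apply' measurableSet_bakerSpace, inter_eq_self_of_subset_left hA,
    inter_eq_self_of_subset_left (twistedBaker_preimage_subset hA),
    volume_preimage_twistedBaker hA]

/-- The twisted baker map preserves the normalized Lebesgue measure on `X`. -/
theorem twistedBaker_measurePreserving (M : ℕ) [NeZero M] (hM : 2 ≤ M)
    (A : Set (Fin M → ℝ)) (hA : A ⊆ bakerSpace M) (hAmeas : MeasurableSet A) :
    bakerMeasure M (twistedBaker M ⁻¹' A) = bakerMeasure M A :=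
  twistedBaker_measurePreserving_general M A hA
end

section
/- Let (a_n)_{n≥0} ∈ {L,R}^ℕ be a sequence in which R occurs infinitely often. Then the diameters of the basic rectangles [a₀⋯a_{n−1}] for the twisted baker map tend to 0 as n → ∞; in particular ⋂_{n≥1} [a₀⋯a_{n−1}] contains at most one point. -/
open MeasureTheory

/-- side length bounds -/
noncomputable def sideV (M : ℕ) [NeZero M] : (ℕ → Bool) → ℕ → Fin M → ℝ
  | _, 0 => fun i => if i = 0 then 2 else 1
  | a, n+1 => fun i =>
      if a 0 then
        (if i + 1 = 0 then sideV M (fun k => a (k+1)) n 0 / 2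
         else sideV M (fun k => a (k+1)) n (i+1))
      else
        (if i = 0 then sideV M (fun k => a (k+1)) n 0 / 2
         else sideV M (fun k => a (k+1)) n i)

def cnt (a : ℕ → Bool) (n : ℕ) : ℕ := ∑ k ∈ Finset.range n, if a k then 1 else 0

lemma cnt_succ' (a : ℕ → Bool) (n : ℕ) :
    cnt a (n+1) = cnt (fun k => a (k+1)) n + (if a 0 then 1 else 0) := by
  exact Finset.sum_range_succ' (fun k => if a k then 1 else 0) n

lemma cnt_succ (a : ℕ → Bool) (n : ℕ) :
    cnt a (n+1) = cnt a n + (if a n then 1 else 0) :=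
  Finset.sum_range_succ _ n

lemma cnt_mono (a : ℕ → Bool) : Monotone (cnt a) :=
  monotone_nat_of_le_succ fun n => by rw [cnt_succ]; omega

lemma cnt_tendsto (a : ℕ → Bool) (ha : {n : ℕ | a n = true}.Infinite) :
    Filter.Tendsto (cnt a) Filter.atTop Filter.atTop := by
  apply (cnt_mono a).tendsto_atTop_atTop
  intro b
  induction b with
  | zero => exact ⟨0, Nat.zero_le _⟩
  | succ b ih =>
    obtain ⟨n, hn⟩ := ih
    obtain ⟨m, hm, hnm⟩ := ha.exists_gt n
    refine ⟨m + 1, ?_⟩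
    have h1 : cnt a (m+1) = cnt a m + 1 := by
      rw [cnt_succ]; simp [Set.mem_setOf_eq.mp hm]
    have := cnt_mono a hnm.le
    omega

def cylSet (M : ℕ) [NeZero M] (a : ℕ → Bool) (n : ℕ) : Set (Fin M → ℝ) :=
  ⋂ k : Fin n, (twistedBaker M)^[(k : ℕ)] ⁻¹' (if a k then bakerR M else bakerL M)

lemma mem_cylSet_succ {M : ℕ} [NeZero M] {a : ℕ → Bool} {n : ℕ} {x : Fin M → ℝ} :
    x ∈ cylSet M a (n+1) ↔
      x ∈ (if a 0 then bakerR M else bakerL M) ∧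
        twistedBaker M x ∈ cylSet M (fun k => a (k+1)) n := by
  simp only [cylSet, Set.mem_iInter, Set.mem_preimage]
  constructor
  · intro h
    refine ⟨by have h00 := h 0; simp only [Fin.val_zero, Function.iterate_zero, id_eq] at h00; exact h00, fun k => ?_⟩
    have := h k.succ
    simpa [Function.iterate_succ_apply] using this
  · intro ⟨h0, h⟩ k
    induction k using Fin.cases with
    | zero => simp only [Fin.val_zero, Function.iterate_zero, id_eq]; exact h0
    | succ j => simpa [Function.iterate_succ_apply] using h j

lemma fin_zero_sub_one_ne {M : ℕ} [NeZero M] (hM : 2 ≤ M) : (0 - 1 : Fin M) ≠ 0 := by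
  obtain ⟨m, rfl⟩ : ∃ m, M = m + 1 := ⟨M - 1, by omega⟩
  rw [zero_sub]
  intro h
  have : ((-1 : Fin (m+1))).val = 0 := by rw [h, Fin.val_zero]
  rw [Fin.coe_neg_one] at this
  omega

lemma mapsL {M : ℕ} [NeZero M] {x : Fin M → ℝ} (hx : x ∈ bakerL M) :
    twistedBaker M x ∈ bakerSpace M := by
  obtain ⟨⟨h0, hi⟩, hneg⟩ := hx
  have h0' := Set.mem_Icc.mp h0
  rw [twistedBaker, if_pos hneg]
  refine ⟨by simp; constructor <;> linarith, fun i hi0 => ?_⟩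
  simp [hi0]
  exact Set.mem_Icc.mp (hi i hi0)

lemma mapsR {M : ℕ} [NeZero M] (hM : 2 ≤ M) {x : Fin M → ℝ} (hx : x ∈ bakerR M) :
    twistedBaker M x ∈ bakerSpace M := by
  obtain ⟨⟨h0, hi⟩, hpos⟩ := hx
  have h0' := Set.mem_Icc.mp h0
  rw [twistedBaker, if_neg (not_lt.mpr hpos)]
  constructor
  · show (if (0:Fin M) = 0 then 1 - 2 * x ((0:Fin M) - 1) else x ((0:Fin M) - 1)) ∈ Set.Icc (-1:ℝ) 1
    rw [if_pos rfl]
    have := Set.mem_Icc.mp (hi (0-1) (fin_zero_sub_one_ne hM))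
    exact Set.mem_Icc.mpr ⟨by linarith [this.1, this.2], by linarith [this.1, this.2]⟩
  · intro i hi0
    simp only [if_neg hi0]
    by_cases h : i - 1 = 0
    · rw [h]; exact Set.mem_Icc.mpr ⟨hpos, h0'.2⟩
    · exact hi _ h

lemma key {M : ℕ} [NeZero M] (hM : 2 ≤ M) :
    ∀ (n : ℕ) (a : ℕ → Bool) (x y : Fin M → ℝ),
      x ∈ bakerSpace M → y ∈ bakerSpace M →
      x ∈ cylSet M a n → y ∈ cylSet M a n →
      ∀ i, |x i - y i| ≤ sideV M a n i := by
  intro n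
  induction n with
  | zero =>
    intro a x y hx hy _ _ i
    simp only [sideV]
    by_cases h : i = 0
    · subst h
      rw [if_pos rfl]
      have h1 := Set.mem_Icc.mp hx.1
      have h2 := Set.mem_Icc.mp hy.1
      rw [abs_sub_le_iff]; constructor <;> linarith
    · rw [if_neg h]
      have h1 := Set.mem_Icc.mp (hx.2 i h)
      have h2 := Set.mem_Icc.mp (hy.2 i h)
      rw [abs_sub_le_iff]; constructor <;> linarith
  | succ n ih =>
    intro a x y hx hy hxc hyc i
    obtain ⟨hx0, hxF⟩ := mem_cylSet_succ.mp hxc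
    obtain ⟨hy0, hyF⟩ := mem_cylSet_succ.mp hyc
    cases ha0 : a 0 with
    | true =>
      rw [ha0] at hx0 hy0
      simp only [if_true] at hx0 hy0
      have hxX := mapsR hM hx0
      have hyX := mapsR hM hy0
      have hv := ih _ _ _ hxX hyX hxF hyF
      have hFx : ∀ j, twistedBaker M x j =
          if j = 0 then 1 - 2 * x (j - 1) else x (j - 1) := by
        intro j; rw [twistedBaker, if_neg (not_lt.mpr hx0.2)]
      have hFy : ∀ j, twistedBaker M y j =
          if j = 0 then 1 - 2 * y (j - 1) else y (j - 1) := by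
        intro j; rw [twistedBaker, if_neg (not_lt.mpr hy0.2)]
      simp only [sideV, ha0, if_true]
      by_cases h1 : i + 1 = 0
      · rw [if_pos h1]
        have hi : (0 : Fin M) - 1 = i := by
          have : i = -1 := eq_neg_of_add_eq_zero_left h1
          rw [this, zero_sub]
        have := hv 0
        rw [hFx 0, hFy 0, if_pos rfl, if_pos rfl, hi] at this
        have habs : |(1 - 2 * x i) - (1 - 2 * y i)| = 2 * |x i - y i| := by
          rw [show (1 - 2 * x i) - (1 - 2 * y i) = 2 * (y i - x i) by ring,
            abs_mul, abs_sub_comm]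
          norm_num
        rw [habs] at this
        linarith
      · rw [if_neg h1]
        have := hv (i + 1)
        rw [hFx (i+1), hFy (i+1), if_neg h1, if_neg h1, add_sub_cancel_right] at this
        exact this
    | false =>
      rw [ha0] at hx0 hy0
      simp only [Bool.false_eq_true, if_false] at hx0 hy0
      have hxX := mapsL hx0
      have hyX := mapsL hy0
      have hv := ih _ _ _ hxX hyX hxF hyF
      have hFx : ∀ j, twistedBaker M x j =
          if j = 0 then 1 + 2 * x 0 else x j := by
        intro j; rw [twistedBaker, if_pos hx0.2]
      have hFy : ∀ j, twistedBaker M y j =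
          if j = 0 then 1 + 2 * y 0 else y j := by
        intro j; rw [twistedBaker, if_pos hy0.2]
      simp only [sideV, ha0, Bool.false_eq_true, if_false]
      by_cases h1 : i = 0
      · subst h1
        rw [if_pos rfl]
        have := hv 0
        rw [hFx 0, hFy 0, if_pos rfl, if_pos rfl] at this
        have habs : |(1 + 2 * x 0) - (1 + 2 * y 0)| = 2 * |x 0 - y 0| := by
          rw [show (1 + 2 * x 0) - (1 + 2 * y 0) = 2 * (x 0 - y 0) by ring, abs_mul]
          norm_num
        rw [habs] at this
        linarith
      · rw [if_neg h1]
        have := hv i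
        rw [hFx i, hFy i, if_neg h1, if_neg h1] at this
        exact this

lemma fin_val_add_one {M : ℕ} [NeZero M] (hM : 2 ≤ M) (i : Fin M) (h : i + 1 ≠ 0) :
    ((i + 1 : Fin M)).val = i.val + 1 := by
  have h1 : ((i + 1 : Fin M)).val = (i.val + 1 % M) % M := Fin.val_add i 1
  have h2 : (1 : ℕ) % M = 1 := Nat.mod_eq_of_lt (by omega)
  rw [h2] at h1
  have h3 : ((i + 1 : Fin M)).val ≠ 0 := by
    intro h0
    exact h (Fin.ext h0)
  have h4 := i.isLt
  rcases Nat.lt_or_ge (i.val + 1) M with h5 | h5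
  · rw [Nat.mod_eq_of_lt h5] at h1; exact h1
  · exfalso
    have : i.val + 1 = M := by omega
    rw [h1, this, Nat.mod_self] at h3
    exact h3 rfl

lemma sideV_le {M : ℕ} [NeZero M] (hM : 2 ≤ M) :
    ∀ (n : ℕ) (a : ℕ → Bool) (i : Fin M),
      sideV M a n i ≤ 2 * (1/2 : ℝ) ^ ((cnt a n + i.val) / M) := by
  intro n
  induction n with
  | zero =>
    intro a i
    have h0 : cnt a 0 = 0 := by simp [cnt]
    have : (cnt a 0 + i.val) / M = 0 := by rw [h0]; exact Nat.div_eq_of_lt (by simpa using i.isLt)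
    rw [this, pow_zero, mul_one]
    simp only [sideV]
    split <;> norm_num
  | succ n ih =>
    intro a i
    have hrec := cnt_succ' a n
    cases ha0 : a 0 with
    | false =>
      rw [ha0] at hrec
      simp only [Bool.false_eq_true, if_false] at hrec
      simp only [sideV, ha0, Bool.false_eq_true, if_false]
      rw [hrec, add_zero]
      by_cases h1 : i = 0
      · subst h1
        rw [if_pos rfl]
        have hi := ih (fun k => a (k+1)) 0
        have hp : (0:ℝ) ≤ (1/2:ℝ) ^ ((cnt (fun k => a (k+1)) n + (0:Fin M).val) / M) := by
          positivity
        linarith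
      · rw [if_neg h1]
        exact ih _ i
    | true =>
      rw [ha0] at hrec
      simp only [if_true] at hrec
      simp only [sideV, ha0, if_true]
      rw [hrec]
      set r := cnt (fun k => a (k+1)) n with hr
      by_cases h1 : i + 1 = 0
      · rw [if_pos h1]
        have hi := ih (fun k => a (k+1)) 0
        rw [Fin.val_zero, add_zero, ← hr] at hi
        have hdiv : (r + 1 + i.val) / M ≤ r / M + 1 := by
          have h2 : r + 1 + i.val ≤ r + M := by have := i.isLt; omega
          calc (r + 1 + i.val) / M ≤ (r + M) / M := Nat.div_le_div_right h2
            _ = r / M + 1 := Nat.add_div_right r (by omega)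
        have hpow : ((1:ℝ)/2) ^ (r/M + 1) ≤ (1/2 : ℝ) ^ ((r + 1 + i.val)/M) :=
          pow_le_pow_of_le_one (by norm_num) (by norm_num) hdiv
        have he : ((1:ℝ)/2) ^ (r/M + 1) = (1/2 : ℝ) ^ (r/M) * (1/2) := pow_succ _ _
        linarith
      · rw [if_neg h1]
        have hi := ih (fun k => a (k+1)) (i+1)
        rw [fin_val_add_one hM i h1, ← hr] at hi
        have : r + (i.val + 1) = r + 1 + i.val := by omega
        rw [this] at hi
        exact hi

lemma diam_cyl_le {M : ℕ} [NeZero M] (hM : 2 ≤ M) (a : ℕ → Bool) (n : ℕ) :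
    EMetric.diam (cylSet M a (n+1)) ≤
      ENNReal.ofReal (2 * (1/2 : ℝ) ^ (cnt a (n+1) / M)) := by
  apply EMetric.diam_le
  intro x hx y hy
  have hxX : x ∈ bakerSpace M := by
    have h := (mem_cylSet_succ.mp hx).1
    split_ifs at h
    exacts [h.1, h.1]
  have hyX : y ∈ bakerSpace M := by
    have h := (mem_cylSet_succ.mp hy).1
    split_ifs at h
    exacts [h.1, h.1]
  have hk := key hM (n+1) a x y hxX hyX hx hy
  have hb : (0:ℝ) ≤ 2 * (1/2 : ℝ) ^ (cnt a (n+1) / M) := by positivity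
  rw [edist_dist]
  apply ENNReal.ofReal_le_ofReal
  rw [dist_pi_le_iff hb]
  intro i
  rw [Real.dist_eq]
  refine (hk i).trans ((sideV_le hM (n+1) a i).trans ?_)
  have hdiv : cnt a (n+1) / M ≤ (cnt a (n+1) + i.val) / M :=
    Nat.div_le_div_right (Nat.le_add_right _ _)
  have := pow_le_pow_of_le_one (by norm_num : (0:ℝ) ≤ 1/2) (by norm_num) hdiv
  linarith


/-- If `R` (encoded `true`) occurs infinitely often in the kneading sequence, the diameters
of the basic rectangles tend to 0; in particular their intersection has at most one point. -/
theorem diam_basic_rectangle_tendsto_zero (M : ℕ) [NeZero M] (hM : 2 ≤ M)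
    (a : ℕ → Bool) (ha : {n : ℕ | a n = true}.Infinite) :
    Filter.Tendsto
      (fun n : ℕ => EMetric.diam
        (⋂ k : Fin n, (twistedBaker M)^[(k : ℕ)] ⁻¹' (if a k then bakerR M else bakerL M)))
      Filter.atTop (nhds 0) ∧
    (⋂ n : ℕ,
      ⋂ k : Fin n, (twistedBaker M)^[(k : ℕ)] ⁻¹'
        (if a k then bakerR M else bakerL M)).Subsingleton := by
  have hdivM : Filter.Tendsto (fun n => cnt a n / M) Filter.atTop Filter.atTop := by
    have houter : Filter.Tendsto (fun m : ℕ => m / M) Filter.atTop Filter.atTop :=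
      Monotone.tendsto_atTop_atTop (fun _ _ h => Nat.div_le_div_right h)
        (fun b => ⟨b * M, by rw [Nat.mul_div_cancel b (by omega)]⟩)
    exact houter.comp (cnt_tendsto a ha)
  have hpow : Filter.Tendsto (fun n => 2 * (1/2 : ℝ) ^ (cnt a n / M))
      Filter.atTop (nhds 0) := by
    have h1 : Filter.Tendsto (fun n => (1/2 : ℝ) ^ (cnt a n / M)) Filter.atTop (nhds 0) :=
      (tendsto_pow_atTop_nhds_zero_of_lt_one (by norm_num) (by norm_num)).comp hdivM
    simpa using h1.const_mul (2:ℝ)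
  have hbd : Filter.Tendsto (fun n => ENNReal.ofReal (2 * (1/2 : ℝ) ^ (cnt a n / M)))
      Filter.atTop (nhds 0) := by
    simpa using ENNReal.tendsto_ofReal (f := Filter.atTop) hpow
  have htd : Filter.Tendsto (fun n : ℕ => EMetric.diam (cylSet M a n))
      Filter.atTop (nhds 0) := by
    apply tendsto_of_tendsto_of_tendsto_of_le_of_le' tendsto_const_nhds hbd
    · exact Filter.Eventually.of_forall fun n => zero_le
    · filter_upwards [Filter.eventually_ge_atTop 1] with n hn
      obtain ⟨m, rfl⟩ : ∃ m, n = m + 1 := ⟨n - 1, by omega⟩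
      exact diam_cyl_le hM a m
  constructor
  · exact htd
  · intro x hx y hy
    have h : ∀ n, edist x y ≤ EMetric.diam (cylSet M a n) := fun n =>
      EMetric.edist_le_diam_of_mem (Set.mem_iInter.mp hx n) (Set.mem_iInter.mp hy n)
    have h0 : edist x y ≤ 0 := ge_of_tendsto' htd h
    exact edist_eq_zero.mp (le_antisymm h0 zero_le)
end

section
/- Let M = 2 and let a₀⋯a_{n−1} ∈ {L,R}^n be a word with an odd number of R's, where J_L = diag(2,1) and J_R = ((0,−2),(1,0)). Then the product J_{a_{n−1}} ⋯ J_{a_0} has no real eigenvalues; its eigenvalues are a pair of complex conjugates ±i·s for some real s > 1. -/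
/-!
Both Jacobians are monomial: `J_L` is diagonal and `J_R` antidiagonal. A diagonal factor
preserves the diagonal/antidiagonal shape of a product and an antidiagonal one swaps it, so a
word with an odd number of `R`'s gives an antidiagonal product `!![0, x; y, 0]`. Since
`det J_L = det J_R = 2`, the product has determinant `-x y = 2 ^ n`, and its characteristic
polynomial is `μ ^ 2 - x y = μ ^ 2 + 2 ^ n`, with roots `±i·2^(n/2)` and no real root.
-/

open Matrix

theorem List.count_ofFn_eq_card_filter {α : Type*} [DecidableEq α] {n : ℕ} (f : Fin n → α)
    (b : α) : (List.ofFn f).count b = (Finset.univ.filter fun k => f k = b).card := by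
  rw [← Multiset.coe_count, ← Fin.univ_val_map, Multiset.count_map, Finset.card_def,
    Finset.filter_val]
  simp_rw [eq_comm]

namespace Matrix

theorem mem_spectrum_antidiag_iff {K : Type*} [Field K] (x y μ : K) :
    μ ∈ spectrum K !![0, x; y, 0] ↔ μ ^ 2 = x * y := by
  have hshift :
      algebraMap K (Matrix (Fin 2) (Fin 2) K) μ - !![0, x; y, 0] = !![μ, -x; -y, μ] := by
    rw [Algebra.algebraMap_eq_smul_one]
    ext i j; fin_cases i <;> fin_cases j <;> simp
  rw [spectrum.mem_iff, isUnit_iff_isUnit_det, isUnit_iff_ne_zero, not_not, hshift,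
    det_fin_two_of, sub_eq_zero]
  ring_nf

theorem spectrum_antidiag_map_ofReal {x y s : ℝ} (h : x * y = -s ^ 2) :
    spectrum ℂ ((!![0, x; y, 0] : Matrix (Fin 2) (Fin 2) ℝ).map Complex.ofReal)
      = {Complex.I * s, -(Complex.I * s)} := by
  have hmap : (!![0, x; y, 0] : Matrix (Fin 2) (Fin 2) ℝ).map Complex.ofReal
      = !![0, (x : ℂ); (y : ℂ), 0] := by
    ext i j; fin_cases i <;> fin_cases j <;> simp
  have hxy : (x : ℂ) * y = (Complex.I * s) ^ 2 := by
    rw [mul_pow, Complex.I_sq, ← Complex.ofReal_mul, h]; push_cast; ring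
  ext μ
  rw [hmap, mem_spectrum_antidiag_iff, hxy, sq_eq_sq_iff_eq_or_eq_neg]
  rfl

theorem spectrum_antidiag_eq_empty {x y : ℝ} (h : x * y < 0) :
    spectrum ℝ (!![0, x; y, 0] : Matrix (Fin 2) (Fin 2) ℝ) = ∅ := by
  ext μ
  rw [mem_spectrum_antidiag_iff, Set.mem_empty_iff_false, iff_false]
  nlinarith [sq_nonneg μ]

theorem prod_map_diag_antidiag {R : Type*} [CommRing R] (J : Bool → Matrix (Fin 2) (Fin 2) R)
    (hdiag : ∃ p q, J false = !![p, 0; 0, q]) (hantidiag : ∃ x y, J true = !![0, x; y, 0])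
    (l : List Bool) :
    ∃ x y, (l.map J).prod = if Odd (l.count true) then !![0, x; y, 0] else !![x, 0; 0, y] := by
  obtain ⟨p, q, hp⟩ := hdiag
  obtain ⟨u, v, hu⟩ := hantidiag
  induction l with
  | nil => exact ⟨1, 1, by simp [one_fin_two]⟩
  | cons b l ih =>
    obtain ⟨x, y, hxy⟩ := ih
    cases b
    · refine ⟨p * x, q * y, ?_⟩
      by_cases h : Odd (l.count true) <;> simp [hxy, hp, h]
    · refine ⟨u * y, v * x, ?_⟩
      by_cases h : Odd (l.count true) <;> simp [hxy, hu, h, Nat.odd_add_one]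

end Matrix

noncomputable def twistedBakerJacobian (b : Bool) : Matrix (Fin 2) (Fin 2) ℝ :=
  if b then !![0, -2; 1, 0] else !![2, 0; 0, 1]

theorem det_twistedBakerJacobian (b : Bool) : (twistedBakerJacobian b).det = 2 := by
  cases b <;> simp [twistedBakerJacobian, det_fin_two_of]

theorem det_prod_twistedBakerJacobian (l : List Bool) :
    (l.map twistedBakerJacobian).prod.det = 2 ^ l.length := by
  rw [← coe_detMonoidHom, map_list_prod, List.map_map]
  simp [Function.comp_def, det_twistedBakerJacobian]

theorem exists_prod_twistedBakerJacobian_eq_antidiag (l : List Bool) (hl : Odd (l.count true)) :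
    ∃ x y, x * y = -2 ^ l.length ∧ (l.map twistedBakerJacobian).prod = !![0, x; y, 0] := by
  obtain ⟨x, y, hxy⟩ := prod_map_diag_antidiag twistedBakerJacobian
    ⟨2, 1, rfl⟩ ⟨-2, 1, rfl⟩ l
  rw [if_pos hl] at hxy
  refine ⟨x, y, ?_, hxy⟩
  have hdet := det_prod_twistedBakerJacobian l
  rw [hxy, det_fin_two_of] at hdet
  linarith

/-- For `M = 2`, a product of Jacobians `J_L = diag(2,1)`, `J_R = ((0,-2),(1,0))` along a
word with an odd number of `R`'s (encoded `true`) has eigenvalues `±i·s` with `s > 1`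
real, and no real eigenvalue. -/
theorem product_odd_twist_eigenvalues (n : ℕ) (a : Fin n → Bool)
    (ht : Odd (Finset.univ.filter fun k => a k = true).card) :
    ∃ s : ℝ, 1 < s ∧
      spectrum ℂ
        (((List.ofFn fun k : Fin n =>
            if a k then !![(0 : ℝ), -2; 1, 0] else !![(2 : ℝ), 0; 0, 1]).reverse.prod).map
          Complex.ofReal)
        = {Complex.I * (s : ℂ), -(Complex.I * (s : ℂ))} ∧
      spectrum ℝ
        ((List.ofFn fun k : Fin n =>
            if a k then !![(0 : ℝ), -2; 1, 0] else !![(2 : ℝ), 0; 0, 1]).reverse.prod)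
        = ∅ := by
  have hword : (List.ofFn fun k : Fin n =>
      if a k then !![(0 : ℝ), -2; 1, 0] else !![(2 : ℝ), 0; 0, 1]).reverse
      = (List.ofFn a).reverse.map twistedBakerJacobian := by
    rw [List.map_reverse, List.map_ofFn]; rfl
  have hodd : Odd ((List.ofFn a).reverse.count true) := by
    rwa [List.count_reverse, List.count_ofFn_eq_card_filter]
  obtain ⟨x, y, hxy, hprod⟩ := exists_prod_twistedBakerJacobian_eq_antidiag _ hodd
  have hn : 0 < n := by
    simpa using hodd.pos.trans_le List.count_le_length
  simp only [List.length_reverse, List.length_ofFn] at hxy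
  have hs : √(2 ^ n) ^ 2 = (2 : ℝ) ^ n := Real.sq_sqrt (by positivity)
  refine ⟨√(2 ^ n), ?_, ?_, ?_⟩
  · exact Real.lt_sqrt_of_sq_lt (by simpa using one_lt_pow₀ one_lt_two hn.ne')
  · rw [hword, hprod]
    exact spectrum_antidiag_map_ofReal (by rw [hs, hxy])
  · rw [hword, hprod]
    exact spectrum_antidiag_eq_empty (by rw [hxy]; exact neg_neg_of_pos (by positivity))
end

section
/- Let M = 2, J_L = diag(2,1), J_R = ((0,−2),(1,0)). For any word a₀⋯a_{n−1} ∈ {L,R}^n containing at least one R, every eigenvalue λ ∈ ℂ of the product P = J_{a_{n−1}} ⋯ J_{a_0} satisfies |λ| > 1. -/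
/-!
Call a real `2 × 2` matrix expanding-monomial if it is `diag(p, q)` with `|p|, |q| ≥ 2` or
`!![0, p; q, 0]` with `|p| ≥ 2`, `|q| ≥ 1`. `J_R` is of this kind, and the class is stable under
multiplication by `J_L` or `J_R` on either side, so splitting a word at any `R` shows that its
product is expanding-monomial. The eigenvalues are then `p, q` in the diagonal case and the
square roots of `p q` in the antidiagonal one.
-/

open Matrix

/-- `J_R` is encoded by `true`, `J_L` by `false`. -/
def bakerJacobian (b : Bool) : Matrix (Fin 2) (Fin 2) ℝ :=
  if b then !![0, -2; 1, 0] else !![2, 0; 0, 1]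

/-- The product `J_{a_{n-1}} ⋯ J_{a_0}` of the word `a_0 ⋯ a_{n-1}`. -/
def bakerWordProd (l : List Bool) : Matrix (Fin 2) (Fin 2) ℝ :=
  (l.map bakerJacobian).reverse.prod

@[simp]
lemma bakerWordProd_nil : bakerWordProd [] = 1 := rfl

@[simp]
lemma bakerWordProd_cons (b : Bool) (l : List Bool) :
    bakerWordProd (b :: l) = bakerWordProd l * bakerJacobian b := by
  simp [bakerWordProd]

lemma bakerWordProd_append (s t : List Bool) :
    bakerWordProd (s ++ t) = bakerWordProd t * bakerWordProd s := by
  simp [bakerWordProd]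

inductive IsExpandingMonomial : Matrix (Fin 2) (Fin 2) ℝ → Prop
  | diag {p q : ℝ} : 2 ≤ |p| → 2 ≤ |q| → IsExpandingMonomial !![p, 0; 0, q]
  | antidiag {p q : ℝ} : 2 ≤ |p| → 1 ≤ |q| → IsExpandingMonomial !![0, p; q, 0]

namespace IsExpandingMonomial

lemma bakerJacobian_true : IsExpandingMonomial (bakerJacobian true) :=
  antidiag (p := -2) (q := 1) (by norm_num) (by norm_num)

lemma bakerJacobian_mul {M : Matrix (Fin 2) (Fin 2) ℝ} (h : IsExpandingMonomial M) (b : Bool) :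
    IsExpandingMonomial (bakerJacobian b * M) := by
  cases h with
  | @diag p q hp hq =>
    cases b
    · convert diag (p := 2 * p) (q := q) (by rw [abs_mul]; norm_num; linarith) hq using 1
      simp [bakerJacobian, mul_comm]
    · convert antidiag (p := -2 * q) (q := p) (by rw [abs_mul]; norm_num; linarith) (by linarith)
        using 1
      simp [bakerJacobian, mul_comm]
  | @antidiag p q hp hq =>
    cases b
    · convert antidiag (p := 2 * p) (q := q) (by rw [abs_mul]; norm_num; linarith) hq using 1
      simp [bakerJacobian, mul_comm]
    · convert diag (p := -2 * q) (q := p) (by rw [abs_mul]; norm_num; linarith) hp using 1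
      simp [bakerJacobian, mul_comm]

lemma mul_bakerJacobian {M : Matrix (Fin 2) (Fin 2) ℝ} (h : IsExpandingMonomial M) (b : Bool) :
    IsExpandingMonomial (M * bakerJacobian b) := by
  cases h with
  | @diag p q hp hq =>
    cases b
    · convert diag (p := 2 * p) (q := q) (by rw [abs_mul]; norm_num; linarith) hq using 1
      simp [bakerJacobian, mul_comm]
    · convert antidiag (p := -2 * p) (q := q) (by rw [abs_mul]; norm_num; linarith) (by linarith)
        using 1
      simp [bakerJacobian, mul_comm]
  | @antidiag p q hp hq =>
    cases b
    · convert antidiag (p := p) (q := 2 * q) hp (by rw [abs_mul]; norm_num; linarith) using 1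
      simp [bakerJacobian, mul_comm]
    · convert diag (p := p) (q := -2 * q) hp (by rw [abs_mul]; norm_num; linarith) using 1
      simp [bakerJacobian, mul_comm]

lemma bakerWordProd_mul {M : Matrix (Fin 2) (Fin 2) ℝ} (h : IsExpandingMonomial M)
    (l : List Bool) : IsExpandingMonomial (bakerWordProd l * M) := by
  induction l generalizing M with
  | nil => simpa using h
  | cons b l ih => simpa [mul_assoc] using ih (h.bakerJacobian_mul b)

lemma mul_bakerWordProd {M : Matrix (Fin 2) (Fin 2) ℝ} (h : IsExpandingMonomial M)
    (l : List Bool) : IsExpandingMonomial (M * bakerWordProd l) := by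
  induction l with
  | nil => simpa using h
  | cons b l ih => simpa [← mul_assoc] using ih.mul_bakerJacobian b

end IsExpandingMonomial

lemma isExpandingMonomial_bakerWordProd {l : List Bool} (hl : true ∈ l) :
    IsExpandingMonomial (bakerWordProd l) := by
  obtain ⟨s, t, rfl⟩ := List.append_of_mem hl
  rw [bakerWordProd_append, bakerWordProd_cons, mul_assoc]
  exact (IsExpandingMonomial.bakerJacobian_true.mul_bakerWordProd s).bakerWordProd_mul t

lemma mem_spectrum_fin_two_iff {K : Type*} [Field K] {A : Matrix (Fin 2) (Fin 2) K} {μ : K} :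
    μ ∈ spectrum K A ↔ μ ^ 2 - A.trace * μ + A.det = 0 := by
  simp [mem_spectrum_iff_isRoot_charpoly, charpoly_fin_two]

lemma IsExpandingMonomial.one_lt_norm_of_mem_spectrum {M : Matrix (Fin 2) (Fin 2) ℝ}
    (h : IsExpandingMonomial M) {μ : ℂ} (hμ : μ ∈ spectrum ℂ (M.map Complex.ofReal)) :
    1 < ‖μ‖ := by
  rw [mem_spectrum_fin_two_iff] at hμ
  cases h with
  | @diag p q hp hq =>
    have hroot : (μ - p) * (μ - q) = 0 := by
      simp only [trace_fin_two, det_fin_two, map_apply, of_apply, cons_val', cons_val_zero,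
        cons_val_one, cons_val_fin_one, Complex.ofReal_zero] at hμ
      linear_combination hμ
    rcases mul_eq_zero.mp hroot with hμp | hμq
    · rw [sub_eq_zero.mp hμp, Complex.norm_real, Real.norm_eq_abs]; linarith
    · rw [sub_eq_zero.mp hμq, Complex.norm_real, Real.norm_eq_abs]; linarith
  | @antidiag p q hp hq =>
    have hsq : μ ^ 2 = (p * q : ℝ) := by
      simp only [trace_fin_two, det_fin_two, map_apply, of_apply, cons_val', cons_val_zero,
        cons_val_one, cons_val_fin_one, Complex.ofReal_zero] at hμ
      push_cast
      linear_combination hμ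
    have hnorm_sq : ‖μ‖ ^ 2 = |p| * |q| := by
      rw [← norm_pow, hsq, Complex.norm_real, Real.norm_eq_abs, abs_mul]
    nlinarith [norm_nonneg μ]

/-- For `M = 2`, any product of the Jacobians `J_L = diag(2,1)`, `J_R = ((0,-2),(1,0))`
along a word containing at least one `R` (encoded `true`) has all complex eigenvalues of
modulus greater than 1. -/
theorem product_eigenvalues_repelling (n : ℕ) (a : Fin n → Bool)
    (ht : ∃ k, a k = true) :
    ∀ lam ∈ spectrum ℂ
        (((List.ofFn fun k : Fin n =>
            if a k then !![(0 : ℝ), -2; 1, 0] else !![(2 : ℝ), 0; 0, 1]).reverse.prod).map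
          Complex.ofReal),
      1 < ‖lam‖ := by
  have hword : true ∈ List.ofFn a := List.mem_ofFn.mpr ht
  have hprod : (List.ofFn fun k : Fin n =>
      if a k then !![(0 : ℝ), -2; 1, 0] else !![(2 : ℝ), 0; 0, 1]).reverse.prod =
      bakerWordProd (List.ofFn a) := by
    rw [bakerWordProd, List.map_ofFn]
    rfl
  rw [hprod]
  exact fun lam hlam => (isExpandingMonomial_bakerWordProd hword).one_lt_norm_of_mem_spectrum hlam
end
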